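/- arXiv:2312.03525 — 12 statements merged into one kernel-verified Lean document; each statement's English description precedes it below -/
import Mathlib

section
/- Let A, B, C, D be subsets of a finite set V such that A∩D, B∩D, C∩D are all nonempty and A\D, B\D, C\D are pairwise disjoint and nonempty. Then, with n = |V|, there is no bijection f : V → Fin n such that f(A), f(B), f(C), f(D) are all intervals [i,j] ⊆ {1,…,n}. -/
/-- A (linear) interval of `Fin n`. -/
def IsInterval {n : ℕ} (S : Set (Fin n)) : Prop :=
  ∃ i j : Fin n, S = Set.Icc i j

lemma left_mem {n : ℕ} {X D : Set (Fin n)} (hX : IsInterval X)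
    {d1 d2 : Fin n} (hD : D = Set.Icc d1 d2) (hXD : (X ∩ D).Nonempty)
    {x y : Fin n} (hxX : x ∈ X) (hyd : y < d1) (hxy : x ≤ y) : y ∈ X \ D := by
  obtain ⟨i, j, hij⟩ := hX
  obtain ⟨p, hpX, hpD⟩ := hXD
  rw [hD, Set.mem_Icc] at hpD
  rw [hij, Set.mem_Icc] at hpX hxX
  refine ⟨?_, ?_⟩
  · rw [hij, Set.mem_Icc]
    exact ⟨le_trans hxX.1 hxy, le_trans (le_of_lt (lt_of_lt_of_le hyd hpD.1)) hpX.2⟩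
  · rw [hD, Set.mem_Icc]
    intro h
    exact absurd h.1 (not_le_of_gt hyd)

lemma right_mem {n : ℕ} {X D : Set (Fin n)} (hX : IsInterval X)
    {d1 d2 : Fin n} (hD : D = Set.Icc d1 d2) (hXD : (X ∩ D).Nonempty)
    {x y : Fin n} (hxX : x ∈ X) (hyd : d2 < y) (hxy : y ≤ x) : y ∈ X \ D := by
  obtain ⟨i, j, hij⟩ := hX
  obtain ⟨p, hpX, hpD⟩ := hXD
  rw [hD, Set.mem_Icc] at hpD
  rw [hij, Set.mem_Icc] at hpX hxX
  refine ⟨?_, ?_⟩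
  · rw [hij, Set.mem_Icc]
    exact ⟨le_trans hpX.1 (le_of_lt (lt_of_le_of_lt hpD.2 hyd)), le_trans hxy hxX.2⟩
  · rw [hD, Set.mem_Icc]
    intro h
    exact absurd h.2 (not_le_of_gt hyd)

lemma two_left {n : ℕ} {X Y D : Set (Fin n)} (hX : IsInterval X) (hY : IsInterval Y)
    {d1 d2 : Fin n} (hD : D = Set.Icc d1 d2)
    (hXD : (X ∩ D).Nonempty) (hYD : (Y ∩ D).Nonempty)
    {x y : Fin n} (hxX : x ∈ X) (hxd : x < d1) (hyY : y ∈ Y) (hyd : y < d1)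
    (hdisj : Disjoint (X \ D) (Y \ D)) : False := by
  rcases le_total x y with h | h
  · have h1 := left_mem hX hD hXD hxX hyd h
    have h2 : y ∈ Y \ D := ⟨hyY, by rw [hD, Set.mem_Icc]; intro hc; exact absurd hc.1 (not_le_of_gt hyd)⟩
    exact Set.disjoint_left.mp hdisj h1 h2
  · have h1 := left_mem hY hD hYD hyY hxd h
    have h2 : x ∈ X \ D := ⟨hxX, by rw [hD, Set.mem_Icc]; intro hc; exact absurd hc.1 (not_le_of_gt hxd)⟩
    exact Set.disjoint_left.mp hdisj h2 h1

lemma two_right {n : ℕ} {X Y D : Set (Fin n)} (hX : IsInterval X) (hY : IsInterval Y)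
    {d1 d2 : Fin n} (hD : D = Set.Icc d1 d2)
    (hXD : (X ∩ D).Nonempty) (hYD : (Y ∩ D).Nonempty)
    {x y : Fin n} (hxX : x ∈ X) (hxd : d2 < x) (hyY : y ∈ Y) (hyd : d2 < y)
    (hdisj : Disjoint (X \ D) (Y \ D)) : False := by
  rcases le_total y x with h | h
  · have h1 := right_mem hX hD hXD hxX hyd h
    have h2 : y ∈ Y \ D := ⟨hyY, by rw [hD, Set.mem_Icc]; intro hc; exact absurd hc.2 (not_le_of_gt hyd)⟩
    exact Set.disjoint_left.mp hdisj h1 h2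
  · have h1 := right_mem hY hD hYD hyY hxd h
    have h2 : x ∈ X \ D := ⟨hxX, by rw [hD, Set.mem_Icc]; intro hc; exact absurd hc.2 (not_le_of_gt hxd)⟩
    exact Set.disjoint_left.mp hdisj h2 h1

/-- If `A∩D`, `B∩D`, `C∩D` are nonempty and `A\D`, `B\D`, `C\D` are pairwise disjoint
and nonempty, then no ordering of `V` realizes `A,B,C,D` simultaneously as intervals. -/
theorem stmt_0 {V : Type*} [Fintype V] (A B C D : Set V)
    (hAD : (A ∩ D).Nonempty) (hBD : (B ∩ D).Nonempty) (hCD : (C ∩ D).Nonempty)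
    (hABdisj : Disjoint (A \ D) (B \ D)) (hBCdisj : Disjoint (B \ D) (C \ D))
    (hACdisj : Disjoint (A \ D) (C \ D))
    (hAne : (A \ D).Nonempty) (hBne : (B \ D).Nonempty) (hCne : (C \ D).Nonempty) :
    ¬ ∃ f : V ≃ Fin (Fintype.card V),
        IsInterval (⇑f '' A) ∧ IsInterval (⇑f '' B) ∧
        IsInterval (⇑f '' C) ∧ IsInterval (⇑f '' D) := by
  rintro ⟨f, hIA, hIB, hIC, hID⟩
  have hinj := f.injective
  have hAD' : ((⇑f '' A) ∩ (⇑f '' D)).Nonempty := by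
    rw [← Set.image_inter hinj]; exact hAD.image _
  have hBD' : ((⇑f '' B) ∩ (⇑f '' D)).Nonempty := by
    rw [← Set.image_inter hinj]; exact hBD.image _
  have hCD' : ((⇑f '' C) ∩ (⇑f '' D)).Nonempty := by
    rw [← Set.image_inter hinj]; exact hCD.image _
  have hAdiff : (⇑f '' A) \ (⇑f '' D) = ⇑f '' (A \ D) := (Set.image_diff hinj A D).symm
  have hBdiff : (⇑f '' B) \ (⇑f '' D) = ⇑f '' (B \ D) := (Set.image_diff hinj B D).symm
  have hCdiff : (⇑f '' C) \ (⇑f '' D) = ⇑f '' (C \ D) := (Set.image_diff hinj C D).symm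
  have hABd : Disjoint ((⇑f '' A) \ (⇑f '' D)) ((⇑f '' B) \ (⇑f '' D)) := by
    rw [hAdiff, hBdiff]; exact (Set.disjoint_image_iff hinj).mpr hABdisj
  have hBCd : Disjoint ((⇑f '' B) \ (⇑f '' D)) ((⇑f '' C) \ (⇑f '' D)) := by
    rw [hBdiff, hCdiff]; exact (Set.disjoint_image_iff hinj).mpr hBCdisj
  have hACd : Disjoint ((⇑f '' A) \ (⇑f '' D)) ((⇑f '' C) \ (⇑f '' D)) := by
    rw [hAdiff, hCdiff]; exact (Set.disjoint_image_iff hinj).mpr hACdisj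
  obtain ⟨d1, d2, hD⟩ := hID
  obtain ⟨x, hxA, hxD⟩ : ((⇑f '' A) \ (⇑f '' D)).Nonempty := by
    rw [hAdiff]; exact hAne.image _
  obtain ⟨y, hyB, hyD⟩ : ((⇑f '' B) \ (⇑f '' D)).Nonempty := by
    rw [hBdiff]; exact hBne.image _
  obtain ⟨z, hzC, hzD⟩ : ((⇑f '' C) \ (⇑f '' D)).Nonempty := by
    rw [hCdiff]; exact hCne.image _
  have hx' : x < d1 ∨ d2 < x := by
    rcases lt_or_ge x d1 with h | h
    · exact Or.inl h
    · refine Or.inr ?_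
      by_contra h2
      push_neg at h2
      exact hxD (hD ▸ Set.mem_Icc.mpr ⟨h, h2⟩)
  have hy' : y < d1 ∨ d2 < y := by
    rcases lt_or_ge y d1 with h | h
    · exact Or.inl h
    · refine Or.inr ?_
      by_contra h2
      push_neg at h2
      exact hyD (hD ▸ Set.mem_Icc.mpr ⟨h, h2⟩)
  have hz' : z < d1 ∨ d2 < z := by
    rcases lt_or_ge z d1 with h | h
    · exact Or.inl h
    · refine Or.inr ?_
      by_contra h2
      push_neg at h2
      exact hzD (hD ▸ Set.mem_Icc.mpr ⟨h, h2⟩)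
  rcases hx' with hx | hx <;> rcases hy' with hy | hy <;> rcases hz' with hz | hz
  · exact two_left hIA hIB hD hAD' hBD' hxA hx hyB hy hABd
  · exact two_left hIA hIB hD hAD' hBD' hxA hx hyB hy hABd
  · exact two_left hIA hIC hD hAD' hCD' hxA hx hzC hz hACd
  · exact two_right hIB hIC hD hBD' hCD' hyB hy hzC hz hBCd
  · exact two_left hIB hIC hD hBD' hCD' hyB hy hzC hz hBCd
  · exact two_right hIA hIC hD hAD' hCD' hxA hx hzC hz hACd
  · exact two_right hIA hIB hD hAD' hBD' hxA hx hyB hy hABd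
  · exact two_right hIA hIB hD hAD' hBD' hxA hx hyB hy hABd
end

section
/- Let A, B, C, D be subsets of a finite set V with |V| = n such that A∩D, B∩D, C∩D are all nonempty and A\D, B\D, C\D are pairwise disjoint and nonempty. Then there is no bijection f : V → ZMod n (equivalently, a circular ordering of V) under which f(A), f(B), f(C), f(D) are all cyclic intervals. -/
/-!
Let `f(D)` be the cyclic interval `{d, …, d + l - 1}`. A cyclic interval `X` meeting both
`f(D)` and its complement must, walking along `X`, step into or out of `f(D)`, so `X \ f(D)`
contains a point adjacent to `f(D)`, i.e. `d - 1` or `d + l`. The three pairwise disjoint sets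
`f(A \ D)`, `f(B \ D)`, `f(C \ D)` cannot each contain one of these two points.
-/

/-- A cyclic interval `{a, a+1, …, a+l-1}` of `ZMod n`. -/
def IsCyclicInterval {n : ℕ} (S : Set (ZMod n)) : Prop :=
  ∃ (a : ZMod n) (l : ℕ), S = (fun t : ℕ => a + (t : ZMod n)) '' {t | t < l}

theorem Nat.exists_not_iff_succ_of_lt {P : ℕ → Prop} {m t₁ t₂ : ℕ} (h₁ : t₁ < m) (h₂ : t₂ < m)
    (hP₁ : P t₁) (hP₂ : ¬ P t₂) : ∃ i, i + 1 < m ∧ ¬ (P i ↔ P (i + 1)) := by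
  by_contra! hstep
  have hconst : ∀ t < m, (P t ↔ P 0) := by
    intro t ht
    induction t with
    | zero => rfl
    | succ t ih => exact (hstep t ht).symm.trans (ih (by omega))
  exact hP₂ ((hconst t₂ h₂).2 ((hconst t₁ h₁).1 hP₁))

section CyclicInterval

variable {n : ℕ}

def cyclicInterval (a : ZMod n) (l : ℕ) : Set (ZMod n) :=
  (fun t : ℕ => a + (t : ZMod n)) '' {t | t < l}

theorem mem_cyclicInterval {a y : ZMod n} {l : ℕ} :
    y ∈ cyclicInterval a l ↔ ∃ t < l, a + t = y := Iff.rfl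

theorem IsCyclicInterval.exists_adjacent {X S : Set (ZMod n)} (hX : IsCyclicInterval X)
    (hin : (X ∩ S).Nonempty) (hout : (X \ S).Nonempty) :
    ∃ y ∈ X \ S, y + 1 ∈ S ∨ y - 1 ∈ S := by
  obtain ⟨x, m, rfl⟩ := hX
  obtain ⟨_, ⟨t₁, ht₁, rfl⟩, hS₁⟩ := hin
  obtain ⟨_, ⟨t₂, ht₂, rfl⟩, hS₂⟩ := hout
  obtain ⟨i, hi, hstep⟩ := Nat.exists_not_iff_succ_of_lt (P := fun t : ℕ => x + t ∈ S)
    ht₁ ht₂ hS₁ hS₂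
  have hmem : ∀ j < m, x + (j : ZMod n) ∈ cyclicInterval x m := fun j hj => ⟨j, hj, rfl⟩
  push_cast at hstep
  by_cases hi_mem : x + (i : ZMod n) ∈ S
  · refine ⟨x + (i + 1 : ℕ), ⟨hmem _ hi, ?_⟩, Or.inr ?_⟩
    · push_cast; tauto
    · convert hi_mem using 2; push_cast; ring
  · refine ⟨x + i, ⟨hmem _ (by omega), hi_mem⟩, Or.inl ?_⟩
    rw [add_assoc]; tauto

theorem eq_of_adjacent_cyclicInterval {d y : ZMod n} {l : ℕ} (hy : y ∉ cyclicInterval d l)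
    (hadj : y + 1 ∈ cyclicInterval d l ∨ y - 1 ∈ cyclicInterval d l) :
    y = d - 1 ∨ y = d + l := by
  simp only [mem_cyclicInterval, not_exists, not_and] at hy hadj
  rcases hadj with ⟨_ | s, hs, hds⟩ | ⟨s, hs, hds⟩
  · left; push_cast at hds; linear_combination -hds
  · refine absurd ?_ (hy s (by omega))
    push_cast at hds; linear_combination hds
  · obtain hsl | hsl := (Nat.succ_le_of_lt hs).lt_or_eq
    · exact absurd (by push_cast; linear_combination hds) (hy (s + 1) hsl)
    · right; rw [← hsl]; push_cast; linear_combination -hds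

end CyclicInterval

theorem Set.false_of_pairwise_disjoint_of_mem_pair {α : Type*} {P Q R : Set α} {p q : α}
    (hP : p ∈ P ∨ q ∈ P) (hQ : p ∈ Q ∨ q ∈ Q) (hR : p ∈ R ∨ q ∈ R)
    (hPQ : Disjoint P Q) (hQR : Disjoint Q R) (hPR : Disjoint P R) : False := by
  rw [Set.disjoint_left] at hPQ hQR hPR
  rcases hP with hP | hP <;> rcases hQ with hQ | hQ <;> rcases hR with hR | hR <;> tauto

/-- If `A∩D`, `B∩D`, `C∩D` are nonempty and `A\D`, `B\D`, `C\D` are pairwise disjoint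
and nonempty, then no circular ordering of `V` realizes `A,B,C,D` simultaneously
as cyclic intervals. -/
theorem stmt_1 {V : Type*} [Fintype V] (A B C D : Set V)
    (hAD : (A ∩ D).Nonempty) (hBD : (B ∩ D).Nonempty) (hCD : (C ∩ D).Nonempty)
    (hABdisj : Disjoint (A \ D) (B \ D)) (hBCdisj : Disjoint (B \ D) (C \ D))
    (hACdisj : Disjoint (A \ D) (C \ D))
    (hAne : (A \ D).Nonempty) (hBne : (B \ D).Nonempty) (hCne : (C \ D).Nonempty) :
    ¬ ∃ f : V ≃ ZMod (Fintype.card V),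
        IsCyclicInterval (⇑f '' A) ∧ IsCyclicInterval (⇑f '' B) ∧
        IsCyclicInterval (⇑f '' C) ∧ IsCyclicInterval (⇑f '' D) := by
  rintro ⟨f, hA, hB, hC, ⟨d, l, hD⟩⟩
  have hboundary : ∀ X : Set V, IsCyclicInterval (f '' X) → (X ∩ D).Nonempty →
      (X \ D).Nonempty → d - 1 ∈ f '' (X \ D) ∨ d + l ∈ f '' (X \ D) := by
    intro X hX hin hout
    rw [Set.image_sdiff f.injective]
    obtain ⟨y, hy, hadj⟩ := hX.exists_adjacent (S := f '' D)
      (by rw [← Set.image_inter f.injective]; exact hin.image f)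
      (by rw [← Set.image_sdiff f.injective]; exact hout.image f)
    rw [hD] at hy hadj
    rcases eq_of_adjacent_cyclicInterval hy.2 hadj with rfl | rfl
    · exact Or.inl (by rwa [hD])
    · exact Or.inr (by rwa [hD])
  have hdisj : ∀ {X Y : Set V}, Disjoint X Y → Disjoint (f '' X) (f '' Y) :=
    (Set.disjoint_image_iff f.injective).mpr
  exact Set.false_of_pairwise_disjoint_of_mem_pair (hboundary A hA hAD hAne)
    (hboundary B hB hBD hBne) (hboundary C hC hCD hCne)
    (hdisj hABdisj) (hdisj hBCdisj) (hdisj hACdisj)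
end

section
/- Let A, B, C be subsets of a finite set V such that A\(B∪C), B\(A∪C), C\(A∪B), and A∩B∩C are all nonempty. Then there is no circular ordering (bijection from V to ZMod n) under which f(A), f(B), f(C) are all cyclic intervals. -/
open Set

variable {n : ℕ} [NeZero n]

lemma ZMod.mem_image_add_natCast_iff (a z : ZMod n) (l : ℕ) :
    z ∈ (fun t : ℕ => a + (t : ZMod n)) '' {t | t < l} ↔ (z - a).val < l := by
  constructor
  · rintro ⟨t, ht, rfl⟩
    rw [add_sub_cancel_left, ZMod.val_natCast]
    exact (Nat.mod_le t n).trans_lt ht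
  · intro h
    exact ⟨(z - a).val, h, by simp⟩

namespace IsCyclicInterval

lemma exists_notMem_iff_val_sub_mem_Ico {S : Set (ZMod n)} (hS : IsCyclicInterval S)
    {x : ZMod n} (hx : x ∈ S) :
    ∃ lo hi : ℕ, ∀ z, z ∉ S ↔ (z - x).val ∈ Ico lo hi := by
  obtain ⟨a, l, rfl⟩ := hS
  rw [ZMod.mem_image_add_natCast_iff] at hx
  refine ⟨l - (x - a).val, n - (x - a).val, fun z => ?_⟩
  have hval : (z - a).val = ((z - x).val + (x - a).val) % n := by
    rw [← ZMod.val_add, sub_add_sub_cancel]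
  have hzx := ZMod.val_lt (z - x)
  have hxa := ZMod.val_lt (x - a)
  rw [ZMod.mem_image_add_natCast_iff, hval, mem_Ico, not_lt]
  rcases lt_or_ge ((z - x).val + (x - a).val) n with h | h
  · rw [Nat.mod_eq_of_lt h]
    omega
  · have hwrap : ((z - x).val + (x - a).val - n) % n = (z - x).val + (x - a).val - n :=
      Nat.mod_eq_of_lt (by omega)
    rw [Nat.mod_eq_sub_mod h, hwrap]
    omega

lemma notMem_of_val_sub_mem_uIcc {S : Set (ZMod n)} (hS : IsCyclicInterval S)
    {x y z w : ZMod n} (hx : x ∈ S) (hy : y ∉ S) (hz : z ∉ S)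
    (hw : (w - x).val ∈ uIcc (y - x).val (z - x).val) : w ∉ S := by
  obtain ⟨lo, hi, hcompl⟩ := hS.exists_notMem_iff_val_sub_mem_Ico hx
  exact (hcompl w).2 (ordConnected_Ico.uIcc_subset ((hcompl y).1 hy) ((hcompl z).1 hz) hw)

theorem false_of_common_of_private {A B C : Set (ZMod n)}
    (hA : IsCyclicInterval A) (hB : IsCyclicInterval B) (hC : IsCyclicInterval C)
    (hABC : (A ∩ B ∩ C).Nonempty) (hA' : (A \ (B ∪ C)).Nonempty)
    (hB' : (B \ (A ∪ C)).Nonempty) (hC' : (C \ (A ∪ B)).Nonempty) : False := by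
  obtain ⟨x, ⟨hxA, hxB⟩, hxC⟩ := hABC
  obtain ⟨p, hpA, hpB, hpC⟩ : ∃ p, p ∈ A ∧ p ∉ B ∧ p ∉ C := by
    simpa [Set.Nonempty, and_assoc] using hA'
  obtain ⟨q, hqB, hqA, hqC⟩ : ∃ q, q ∈ B ∧ q ∉ A ∧ q ∉ C := by
    simpa [Set.Nonempty, and_assoc] using hB'
  obtain ⟨r, hrC, hrA, hrB⟩ : ∃ r, r ∈ C ∧ r ∉ A ∧ r ∉ B := by
    simpa [Set.Nonempty, and_assoc] using hC'
  have middle : ∀ a b c : ℕ, a ∈ uIcc b c ∨ b ∈ uIcc a c ∨ c ∈ uIcc a b := by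
    intro a b c
    simp only [mem_uIcc]
    omega
  rcases middle (p - x).val (q - x).val (r - x).val with h | h | h
  · exact hA.notMem_of_val_sub_mem_uIcc hxA hqA hrA h hpA
  · exact hB.notMem_of_val_sub_mem_uIcc hxB hpB hrB h hqB
  · exact hC.notMem_of_val_sub_mem_uIcc hxC hpC hqC h hrC

end IsCyclicInterval

/-- Three sets with a common point, each containing a private element, cannot all be
realized as cyclic intervals under any circular ordering. -/
theorem stmt_2 {V : Type*} [Fintype V] (A B C : Set V)
    (hA : (A \ (B ∪ C)).Nonempty) (hB : (B \ (A ∪ C)).Nonempty)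
    (hC : (C \ (A ∪ B)).Nonempty) (hABC : (A ∩ B ∩ C).Nonempty) :
    ¬ ∃ f : V ≃ ZMod (Fintype.card V),
        IsCyclicInterval (⇑f '' A) ∧ IsCyclicInterval (⇑f '' B) ∧
        IsCyclicInterval (⇑f '' C) := by
  rintro ⟨f, hfA, hfB, hfC⟩
  have : Nonempty V := ⟨hABC.some⟩
  have hf := f.injective
  refine IsCyclicInterval.false_of_common_of_private (n := Fintype.card V) hfA hfB hfC ?_ ?_ ?_ ?_
  · rw [← image_inter hf, ← image_inter hf]
    exact hABC.image f
  all_goals rw [← image_union, ← image_sdiff hf]; exact Nonempty.image f ‹_›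
end

section
/- Let A₁, A₂, …, Aₘ (m ≥ 4) be subsets of a finite set V such that Aᵢ ∩ Aⱼ ≠ ∅ if and only if i = j or i ≡ j ± 1 (mod m). Then there is no bijection f : V → {1,…,n} under which every f(Aᵢ) is a (linear) interval. -/
open Set

lemma ZMod.natCast_ne_zero_of_pos_of_lt {m c : ℕ} (hc : 0 < c) (hcm : c < m) :
    (c : ZMod m) ≠ 0 := by
  rw [Ne, ZMod.natCast_eq_zero_iff]
  exact Nat.not_dvd_of_pos_of_lt hc hcm

lemma ZMod.sub_one_not_adj_add_one {m : ℕ} (hm : 4 ≤ m) (k : ZMod m) :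
    ¬ (k - 1 = k + 1 ∨ k - 1 = k + 1 + 1 ∨ k + 1 = k - 1 + 1) := by
  have h1 := ZMod.natCast_ne_zero_of_pos_of_lt (m := m) (c := 1) (by omega) (by omega)
  have h2 := ZMod.natCast_ne_zero_of_pos_of_lt (m := m) (c := 2) (by omega) (by omega)
  have h3 := ZMod.natCast_ne_zero_of_pos_of_lt (m := m) (c := 3) (by omega) (by omega)
  push_cast at h1 h2 h3
  rintro (h | h | h)
  · exact h2 (by linear_combination -h)
  · exact h3 (by linear_combination -h)
  · exact h1 (by linear_combination h)

lemma Set.mem_Icc_of_inter_nonempty_of_le {α : Type*} [Preorder α] {a b c d : α}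
    (h : (Icc a b ∩ Icc c d).Nonempty) (hac : a ≤ c) : c ∈ Icc a b := by
  obtain ⟨x, ⟨-, hxb⟩, ⟨hcx, -⟩⟩ := h
  exact ⟨hac, hcx.trans hxb⟩

theorem not_cyclic_pattern_Icc {α : Type*} [LinearOrder α] {m : ℕ} (hm : 4 ≤ m)
    (a b : ZMod m → α)
    (hpat : ∀ i j : ZMod m,
      (Icc (a i) (b i) ∩ Icc (a j) (b j)).Nonempty ↔ (i = j ∨ i = j + 1 ∨ j = i + 1)) :
    False := by
  have : NeZero m := ⟨by omega⟩
  obtain ⟨k, hk⟩ := Finite.exists_max a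
  have mem_of_adj : ∀ j, (j = k + 1 ∨ k = j + 1) → a k ∈ Icc (a j) (b j) := fun j hj =>
    mem_Icc_of_inter_nonempty_of_le ((hpat j k).mpr (Or.inr hj)) (hk j)
  have hmeet : (Icc (a (k - 1)) (b (k - 1)) ∩ Icc (a (k + 1)) (b (k + 1))).Nonempty :=
    ⟨a k, mem_of_adj _ (Or.inr (by ring)), mem_of_adj _ (Or.inl rfl)⟩
  exact ZMod.sub_one_not_adj_add_one hm k ((hpat _ _).mp hmeet)

/-- A cyclic chain of `m ≥ 4` sets (each meeting exactly itself and its two cyclic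
neighbors) cannot be realized as a family of intervals on a line. -/
theorem stmt_3 {V : Type*} [Fintype V] {m : ℕ} (hm : 4 ≤ m) (A : ZMod m → Set V)
    (hpat : ∀ i j : ZMod m, (A i ∩ A j).Nonempty ↔ (i = j ∨ i = j + 1 ∨ j = i + 1)) :
    ¬ ∃ f : V ≃ Fin (Fintype.card V), ∀ i : ZMod m, IsInterval (⇑f '' A i) := by
  rintro ⟨f, hf⟩
  choose a b hab using hf
  refine not_cyclic_pattern_Icc hm a b fun i j => ?_
  rw [← hab i, ← hab j, ← image_inter f.injective, image_nonempty]
  exact hpat i j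
end

section
/- Let A, B, C be subsets of a finite set V such that (A∩B)\C, (B∩C)\A, and (A∩C)\B are all nonempty. Then there is no bijection f : V → {1,…,n} under which f(A), f(B), f(C) are all intervals. -/
theorem IsInterval.ordConnected {n : ℕ} {S : Set (Fin n)} (h : IsInterval S) :
    S.OrdConnected := by
  obtain ⟨i, j, rfl⟩ := h
  exact Set.ordConnected_Icc

namespace Set

open scoped Interval

variable {α : Type*} [LinearOrder α]

theorem mem_uIcc_or_mem_uIcc_or_mem_uIcc (x y z : α) :
    x ∈ [[y, z]] ∨ y ∈ [[x, z]] ∨ z ∈ [[x, y]] := by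
  simp only [mem_uIcc]
  rcases le_total x y with hxy | hxy <;> rcases le_total y z with hyz | hyz <;>
    rcases le_total x z with hxz | hxz <;> simp_all

theorem OrdConnected.inter_diff_eq_empty {S T U : Set α} (hS : S.OrdConnected)
    (hT : T.OrdConnected) (hU : U.OrdConnected) (hST : ((S ∩ T) \ U).Nonempty)
    (hTU : ((T ∩ U) \ S).Nonempty) : (S ∩ U) \ T = ∅ := by
  obtain ⟨x, ⟨hxS, hxT⟩, hxU⟩ := hST
  obtain ⟨y, ⟨hyT, hyU⟩, hyS⟩ := hTU
  refine eq_empty_of_forall_notMem fun z ⟨⟨hzS, hzU⟩, hzT⟩ => ?_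
  rcases mem_uIcc_or_mem_uIcc_or_mem_uIcc x y z with hx | hy | hz
  · exact hxU (hU.uIcc_subset hyU hzU hx)
  · exact hyS (hS.uIcc_subset hxS hzS hy)
  · exact hzT (hT.uIcc_subset hxT hyT hz)

end Set

/-- Three sets whose pairwise intersections each contain a point outside the third set
cannot all be realized as intervals on a line. -/
theorem stmt_4 {V : Type*} [Fintype V] (A B C : Set V)
    (hAB : ((A ∩ B) \ C).Nonempty) (hBC : ((B ∩ C) \ A).Nonempty)
    (hAC : ((A ∩ C) \ B).Nonempty) :
    ¬ ∃ f : V ≃ Fin (Fintype.card V),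
        IsInterval (⇑f '' A) ∧ IsInterval (⇑f '' B) ∧ IsInterval (⇑f '' C) := by
  rintro ⟨f, hA, hB, hC⟩
  have image_inter_diff (S T U : Set V) : f '' ((S ∩ T) \ U) = (f '' S ∩ f '' T) \ f '' U := by
    rw [Set.image_sdiff f.injective, Set.image_inter f.injective]
  have hAC_empty := Set.OrdConnected.inter_diff_eq_empty hA.ordConnected hB.ordConnected
    hC.ordConnected (image_inter_diff A B C ▸ hAB.image f) (image_inter_diff B C A ▸ hBC.image f)
  exact (image_inter_diff A C B ▸ hAC.image f).ne_empty hAC_empty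
end

section
/- Let V be a finite set of cardinality n, let A₁ ⊆ A₂ ⊆ ⋯ ⊆ Aₘ and B₁ ⊇ B₂ ⊇ ⋯ ⊇ Bₚ be two chains of subsets of V such that for all i, j: if Aᵢ ∩ Bⱼ ≠ ∅ then Aᵢ ∪ Bⱼ = V. Then there exists a bijection f : V → {1,…,n} such that f(Aᵢ) = {1, 2, …, |Aᵢ|} for every i and f(Bⱼ) = {n − |Bⱼ| + 1, …, n} for every j. -/
/-!
Number the points of `V` along the lexicographic order of the key
`x ↦ (#{i | x ∈ Aᵢ} decreasing, #{j | x ∈ Bⱼ} increasing)`, breaking ties arbitrarily.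
Because the `Aᵢ` form a chain, `x ∈ Aᵢ ∌ y` forces a strictly larger `A`-count at `x`, so every
`Aᵢ` becomes an initial segment. If `x ∈ Bⱼ ∌ y`, then `x` has the larger `B`-count, and its
`A`-count is not larger than that of `y`: otherwise some `Aᵢ` contains `x` but not `y`, so
`Aᵢ` meets `Bⱼ` at `x` while `y ∉ Aᵢ ∪ Bⱼ`. Hence every `Bⱼ` becomes a terminal segment, and a
segment of `Fin n` is determined by its cardinality.
-/

theorem IsLowerSet.eq_setOf_lt_ncard {n : ℕ} {T : Set (Fin n)} (hT : IsLowerSet T) :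
    T = {k : Fin n | (k : ℕ) < T.ncard} := by
  ext k
  constructor
  · intro hk
    have : (Set.Iic k).ncard ≤ T.ncard := Set.ncard_le_ncard fun _ hj => hT hj hk
    rwa [← Finset.coe_Iic, Set.ncard_coe_finset, Fin.card_Iic] at this
  · intro hk
    by_contra hkT
    have : T.ncard ≤ (Set.Iio k).ncard :=
      Set.ncard_le_ncard fun t ht => not_le.1 fun hkt => hkT (hT hkt ht)
    rw [← Finset.coe_Iio, Set.ncard_coe_finset, Fin.card_Iio] at this
    exact absurd hk (not_lt.2 this)

theorem IsUpperSet.eq_setOf_sub_ncard_le {n : ℕ} {T : Set (Fin n)} (hT : IsUpperSet T) :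
    T = {k : Fin n | n - T.ncard ≤ (k : ℕ)} := by
  have hcard : T.ncard + Tᶜ.ncard = n := by
    rw [Set.ncard_add_ncard_compl, Nat.card_eq_fintype_card, Fintype.card_fin]
  ext k
  rw [← not_iff_not, ← Set.mem_compl_iff, hT.compl.eq_setOf_lt_ncard]
  simp only [Set.mem_ofPred_eq, not_le]
  omega

namespace Equiv

variable {V : Type*} {n : ℕ} (e : V ≃ Fin n) {S : Set V}

theorem image_eq_setOf_lt_ncard (hS : ∀ x ∈ S, ∀ y ∉ S, e x < e y) :
    e '' S = {k : Fin n | (k : ℕ) < S.ncard} := by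
  have hlower : IsLowerSet (e '' S) := by
    rintro _ k hk ⟨x, hx, rfl⟩
    refine ⟨e.symm k, of_not_not fun hk' => ?_, e.apply_symm_apply k⟩
    exact (hS x hx _ hk').not_ge (by simpa using hk)
  rw [hlower.eq_setOf_lt_ncard, Set.ncard_image_of_injective S e.injective]

theorem image_eq_setOf_sub_ncard_le (hS : ∀ x ∈ S, ∀ y ∉ S, e y < e x) :
    e '' S = {k : Fin n | n - S.ncard ≤ (k : ℕ)} := by
  have hupper : IsUpperSet (e '' S) := by
    rintro _ k hk ⟨x, hx, rfl⟩
    refine ⟨e.symm k, of_not_not fun hk' => ?_, e.apply_symm_apply k⟩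
    exact (hS x hx _ hk').not_ge (by simpa using hk)
  rw [hupper.eq_setOf_sub_ncard_le, Set.ncard_image_of_injective S e.injective]

end Equiv

theorem exists_equiv_fin_lt_of_lt {V α : Type*} [Fintype V] [LinearOrder α] (K : V → α) :
    ∃ e : V ≃ Fin (Fintype.card V), ∀ x y, K x < K y → e x < e y := by
  let g := Fintype.equivFin V
  let σ := Tuple.sort (K ∘ g.symm)
  refine ⟨g.trans σ.symm, fun x y hxy => not_le.1 fun hyx => hxy.not_ge ?_⟩
  simpa [σ] using Tuple.monotone_sort (K ∘ g.symm) hyx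

open OrderDual

noncomputable def memCount {ι V : Type*} (A : ι → Set V) (x : V) : ℕ := {i | x ∈ A i}.ncard

noncomputable def flagKey {ι κ V : Type*} (A : ι → Set V) (B : κ → Set V) (x : V) :
    ℕᵒᵈ ×ₗ ℕ :=
  toLex (toDual (memCount A x), memCount B x)

section

variable {ι κ V : Type*} {A : ι → Set V} {B : κ → Set V} {x y : V}

theorem Monotone.memCount_lt_of_mem_of_notMem [LinearOrder ι] [Finite ι] (hA : Monotone A)
    {i : ι} (hx : x ∈ A i) (hy : y ∉ A i) : memCount A y < memCount A x := by
  refine Set.ncard_lt_ncard ⟨fun k hk => ?_, fun hsub => hy (hsub hx)⟩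
  exact hA (le_of_not_ge fun hki => hy (hA hki hk)) hx

theorem exists_mem_notMem_of_memCount_lt [Finite ι] (h : memCount A y < memCount A x) :
    ∃ i, x ∈ A i ∧ y ∉ A i :=
  Set.exists_mem_notMem_of_ncard_lt_ncard h

theorem memCount_le_of_memCount_lt [Finite ι] [Finite κ]
    (h : ∀ i j, (A i ∩ B j).Nonempty → A i ∪ B j = Set.univ)
    (hxy : memCount B y < memCount B x) : memCount A x ≤ memCount A y := by
  by_contra! hlt
  obtain ⟨i, hxi, hyi⟩ := exists_mem_notMem_of_memCount_lt hlt
  obtain ⟨j, hxj, hyj⟩ := exists_mem_notMem_of_memCount_lt hxy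
  have hy : y ∈ A i ∪ B j := (h i j ⟨x, hxi, hxj⟩).symm ▸ Set.mem_univ y
  exact hy.elim hyi hyj

theorem flagKey_lt_of_mem_of_notMem_left [LinearOrder ι] [Finite ι] (hA : Monotone A)
    {i : ι} (hx : x ∈ A i) (hy : y ∉ A i) : flagKey A B x < flagKey A B y :=
  Prod.Lex.toLex_lt_toLex.2 (Or.inl (hA.memCount_lt_of_mem_of_notMem hx hy))

theorem flagKey_lt_of_mem_of_notMem_right [Finite ι] [LinearOrder κ] [Finite κ]
    (hB : Antitone B) (h : ∀ i j, (A i ∩ B j).Nonempty → A i ∪ B j = Set.univ) {j : κ}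
    (hx : x ∈ B j) (hy : y ∉ B j) : flagKey A B y < flagKey A B x :=
  have hb : memCount B y < memCount B x :=
    hB.dual_left.memCount_lt_of_mem_of_notMem (i := toDual j) hx hy
  Prod.Lex.toLex_lt_toLex'.2 ⟨memCount_le_of_memCount_lt h hb, fun _ => hb⟩

end

/-- Two flags, an increasing one and a decreasing one, such that any two members that
meet must cover `V`, can be simultaneously realized as initial and terminal intervals. -/
theorem stmt_6 {V : Type*} [Fintype V] {m p : ℕ}
    (A : Fin m → Set V) (B : Fin p → Set V)
    (hA : Monotone A) (hB : Antitone B)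
    (h : ∀ i j, (A i ∩ B j).Nonempty → A i ∪ B j = Set.univ) :
    ∃ f : V ≃ Fin (Fintype.card V),
      (∀ i, ⇑f '' A i = {k : Fin (Fintype.card V) | (k : ℕ) < (A i).ncard}) ∧
      (∀ j, ⇑f '' B j = {k : Fin (Fintype.card V) |
        Fintype.card V - (B j).ncard ≤ (k : ℕ)}) := by
  obtain ⟨f, hf⟩ := exists_equiv_fin_lt_of_lt (flagKey A B)
  refine ⟨f, fun i => f.image_eq_setOf_lt_ncard ?_, fun j => f.image_eq_setOf_sub_ncard_le ?_⟩
  · exact fun x hx y hy => hf x y (flagKey_lt_of_mem_of_notMem_left hA hx hy)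
  · exact fun x hx y hy => hf y x (flagKey_lt_of_mem_of_notMem_right hB h hx hy)
end

section
/- Let M be a paving matroid of rank d ≥ 2 on ground set [n], with E the collection of its dependent hyperplanes, and let x ∈ [n] not be a coloop. Then the collection of dependent hyperplanes of the deletion M − x equals {H : H ∈ E, x ∉ H} ∪ {H \ {x} : H ∈ E, x ∈ H, |H| > d}. -/
/-- A hyperplane of a matroid: a maximal proper flat. -/
def Matroid.IsHyperplane' {α : Type*} (M : Matroid α) (H : Set α) : Prop :=
  M.IsFlat H ∧ H ≠ M.E ∧ ∀ F, M.IsFlat F → H ⊂ F → F = M.E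

/-- The deletion of a single element: restriction to the complement. -/
noncomputable def Matroid.deleteElem' {α : Type*} (M : Matroid α) (x : α) : Matroid α :=
  M.restrict (M.E \ {x})

/-!
In a paving matroid of rank `d`, a basis `I` of a dependent set `X` has `|I| ≥ d - 1`, so any
element outside `cl X` extends `I` to a base: every dependent non-spanning set spans a hyperplane,
and a dependent subset of a hyperplane `H` spans `H`. Since `x` is not a coloop, `M − x` is again
paving of rank `d`. A dependent hyperplane `H'` of `M − x` is therefore `cl H' \ {x}` for the
dependent hyperplane `cl H'` of `M`; conversely `H \ {x}` is a dependent hyperplane of `M − x`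
as soon as it is dependent, which by the paving condition happens exactly when `x ∉ H` or
`|H| > d`.
-/

open Set

namespace Matroid

variable {α : Type*} {M : Matroid α} {d : ℕ} {H K I X : Set α} {x : α}

structure IsPavingOfRank (M : Matroid α) (d : ℕ) : Prop where
  ncard_eq_of_isBase : ∀ B, M.IsBase B → B.ncard = d
  le_ncard_of_dep : ∀ D, M.Dep D → d ≤ D.ncard

lemma IsPavingOfRank.delete (hP : M.IsPavingOfRank d) (hx : ¬ M.IsColoop x) :
    (M ＼ {x}).IsPavingOfRank d := by
  have hspan : M.Spanning (M.E \ {x}) := by rwa [isColoop_iff_sdiff_not_spanning, not_not] at hx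
  refine ⟨fun B hB ↦ ?_, fun D hD ↦ hP.le_ncard_of_dep D (delete_dep_iff.1 hD).1⟩
  rw [delete_eq_restrict, hspan.isBase_restrict_iff] at hB
  exact hP.ncard_eq_of_isBase B hB.1

lemma IsHyperplane'.eq_of_subset (hH : M.IsHyperplane' H) (hK : M.IsHyperplane' K) (hHK : H ⊆ K) :
    H = K := by
  by_contra hne
  exact hK.2.1 (hH.2.2 K hK.1 (hHK.ssubset_of_ne hne))

namespace IsPavingOfRank

variable [M.RankFinite] (hP : M.IsPavingOfRank d)
include hP

lemma isBase_of_indep (hI : M.Indep I) (hcard : d ≤ I.ncard) : M.IsBase I := by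
  obtain ⟨B, hB, hIB⟩ := hI.exists_isBase_superset
  rwa [eq_of_subset_of_ncard_le hIB (hP.ncard_eq_of_isBase B hB ▸ hcard) hB.finite]

lemma isHyperplane'_closure (hX : M.Dep X) (hne : M.closure X ≠ M.E) :
    M.IsHyperplane' (M.closure X) := by
  obtain ⟨I, hI⟩ := M.exists_isBasis X hX.subset_ground
  obtain ⟨e, heX, heI⟩ := exists_of_ssubset <|
    hI.subset.ssubset_of_ne fun h ↦ hX.not_indep (h ▸ hI.indep)
  have hcard : d ≤ I.ncard + 1 := by
    have hdep : M.Dep (insert e I) := hI.indep.insert_dep_iff.2 ⟨hI.subset_closure heX, heI⟩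
    simpa [ncard_insert_of_notMem heI hI.indep.finite] using hP.le_ncard_of_dep _ hdep
  refine ⟨M.isFlat_closure X, hne, fun F hF hXF ↦ ?_⟩
  obtain ⟨f, hfF, hfX⟩ := exists_of_ssubset hXF
  rw [← hI.closure_eq_closure] at hfX
  have hfI : f ∉ I := fun h ↦ hfX (M.subset_closure I hI.indep.subset_ground h)
  have hins : M.Indep (insert f I) :=
    hI.indep.insert_indep_iff_of_notMem hfI |>.2 ⟨hF.subset_ground hfF, hfX⟩
  have hbase : M.IsBase (insert f I) :=
    hP.isBase_of_indep hins (by rwa [ncard_insert_of_notMem hfI hI.indep.finite])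
  refine hF.subset_ground.antisymm ?_
  rw [← hbase.closure_eq, ← hF.closure]
  exact M.closure_subset_closure <| insert_subset hfF <|
    (hI.subset.trans (M.subset_closure X hX.subset_ground)).trans hXF.subset

lemma closure_eq_of_dep_subset (hH : M.IsHyperplane' H) (hX : M.Dep X) (hXH : X ⊆ H) :
    M.closure X = H := by
  have hclH : M.closure X ⊆ H := hH.1.closure ▸ M.closure_subset_closure hXH
  refine (hP.isHyperplane'_closure hX fun h ↦ hH.2.1 ?_).eq_of_subset hH hclH
  exact hH.1.subset_ground.antisymm (h ▸ hclH)

lemma dep_of_subset_isHyperplane' (hH : M.IsHyperplane' H) (hXH : X ⊆ H) (hcard : d ≤ X.ncard) :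
    M.Dep X := by
  refine ⟨fun hX ↦ hH.2.1 (hH.1.subset_ground.antisymm ?_), hXH.trans hH.1.subset_ground⟩
  rw [← (hP.isBase_of_indep hX hcard).closure_eq, ← hH.1.closure]
  exact M.closure_subset_closure hXH

lemma isHyperplane'_delete (hx : ¬ M.IsColoop x) (hH : M.IsHyperplane' H)
    (hdep : M.Dep (H \ {x})) :
    (M ＼ {x}).IsHyperplane' (H \ {x}) ∧ (M ＼ {x}).Dep (H \ {x}) := by
  have hcl : M.closure (H \ {x}) = H := hP.closure_eq_of_dep_subset hH hdep sdiff_subset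
  have hdep' : (M ＼ {x}).Dep (H \ {x}) := delete_dep_iff.2 ⟨hdep, disjoint_sdiff_left⟩
  have hcl' : (M ＼ {x}).closure (H \ {x}) = H \ {x} := by
    rw [delete_closure_eq, sdiff_sdiff, union_self, hcl]
  refine ⟨hcl' ▸ (hP.delete hx).isHyperplane'_closure hdep' fun h ↦ hH.2.1 ?_, hdep'⟩
  rw [hcl', delete_ground] at h
  rw [← hcl, h]
  exact not_not.1 (mt isColoop_iff_sdiff_closure.2 hx)

lemma isHyperplane'_closure_of_delete (hH : (M ＼ {x}).IsHyperplane' H)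
    (hdep : (M ＼ {x}).Dep H) :
    M.IsHyperplane' (M.closure H) ∧ M.Dep (M.closure H) ∧ M.closure H \ {x} = H := by
  obtain ⟨hdepM, hdisj⟩ := delete_dep_iff.1 hdep
  have hcl : M.closure H \ {x} = H := by
    simpa [delete_closure_eq, hdisj.sdiff_eq_left] using hH.1.closure
  have hne : M.closure H ≠ M.E := fun h ↦ hH.2.1 (by rw [delete_ground, ← h, hcl])
  exact ⟨hP.isHyperplane'_closure hdepM hne,
    hdepM.superset (M.subset_closure H hdepM.subset_ground), hcl⟩

end IsPavingOfRank

lemma deleteElem'_eq_delete (M : Matroid α) (x : α) : M.deleteElem' x = M ＼ {x} := rfl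

end Matroid

open Matroid

theorem stmt_8_general {n d : ℕ} (M : Matroid (Fin n))
    (hrank : ∀ B, M.IsBase B → B.ncard = d)
    (hpaving : ∀ D, M.Dep D → d ≤ D.ncard)
    (E : Set (Set (Fin n))) (hEdef : E = {H | M.IsHyperplane' H ∧ M.Dep H})
    (x : Fin n) (hx : ¬ ∀ B, M.IsBase B → x ∈ B) :
    {H | (M.deleteElem' x).IsHyperplane' H ∧ (M.deleteElem' x).Dep H} =
      {H | H ∈ E ∧ x ∉ H} ∪ {H' | ∃ H ∈ E, x ∈ H ∧ d < H.ncard ∧ H' = H \ {x}} := by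
  have hP : M.IsPavingOfRank d := ⟨hrank, hpaving⟩
  have hx' : ¬ M.IsColoop x := fun h ↦ hx fun _ hB ↦ h.mem_of_isBase hB
  subst hEdef
  ext H'
  simp only [deleteElem'_eq_delete, mem_ofPred_eq, mem_union]
  constructor
  · rintro ⟨hH', hdep'⟩
    obtain ⟨hH, hdep, hH'eq⟩ := hP.isHyperplane'_closure_of_delete hH' hdep'
    by_cases hxH : x ∈ M.closure H'
    · refine Or.inr ⟨_, ⟨hH, hdep⟩, hxH, ?_, hH'eq.symm⟩
      have hsucc := ncard_sdiff_singleton_add_one hxH (toFinite _)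
      have hle := hpaving H' (delete_dep_iff.1 hdep').1
      rw [hH'eq] at hsucc
      omega
    · rw [sdiff_singleton_eq_self hxH] at hH'eq
      exact Or.inl ⟨hH'eq ▸ ⟨hH, hdep⟩, hH'eq ▸ hxH⟩
  · rintro (⟨⟨hH, hdep⟩, hxH⟩ | ⟨H, ⟨hH, -⟩, hxH, hcard, rfl⟩)
    · simpa only [sdiff_singleton_eq_self hxH] using
        hP.isHyperplane'_delete hx' hH (by rwa [sdiff_singleton_eq_self hxH])
    · refine hP.isHyperplane'_delete hx' hH (hP.dep_of_subset_isHyperplane' hH sdiff_subset ?_)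
      have := ncard_sdiff_singleton_add_one hxH (toFinite H)
      omega

/-- For a paving matroid `M` of rank `d ≥ 2` on `[n]` with `x` not a coloop, the
dependent hyperplanes of `M − x` are the dependent hyperplanes of `M` avoiding `x`
together with the sets `H \ {x}` for large dependent hyperplanes `H` containing `x`. -/
theorem stmt_8 {n d : ℕ} (M : Matroid (Fin n)) (hE : M.E = Set.univ) (hd : 2 ≤ d)
    (hrank : ∀ B, M.IsBase B → B.ncard = d)
    (hpaving : ∀ D, M.Dep D → d ≤ D.ncard)
    (E : Set (Set (Fin n))) (hEdef : E = {H | M.IsHyperplane' H ∧ M.Dep H})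
    (x : Fin n) (hx : ¬ ∀ B, M.IsBase B → x ∈ B) :
    {H | (M.deleteElem' x).IsHyperplane' H ∧ (M.deleteElem' x).Dep H} =
      {H | H ∈ E ∧ x ∉ H} ∪ {H' | ∃ H ∈ E, x ∈ H ∧ d < H.ncard ∧ H' = H \ {x}} :=
  stmt_8_general M hrank hpaving E hEdef x hx
end

section
/- Let M be a paving matroid of rank d ≥ 2 on ground set [n] with E its collection of dependent hyperplanes, and let x ∈ [n] not be a coloop. Then the collection of dependent hyperplanes of the contraction M / x equals {H \ {x} : H ∈ E, x ∈ H}. -/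
/-- The contraction of a single element, defined by duality:
`M / x = (M✶ − x)✶`. -/
noncomputable def Matroid.contractElem' {α : Type*} (M : Matroid α) (x : α) : Matroid α :=
  ((M✶.restrict (M✶.E \ {x})))✶

/-!
Contracting a set `C` of a matroid identifies the flats of `M ／ C` with the flats of `M`
containing `C`, via `F ↦ F ∪ C`. This correspondence preserves strict inclusion and sends the
ground set `M.E \ C` to `M.E`, so it matches hyperplanes with hyperplanes; and when `C` is
independent it matches dependent sets with dependent sets. For `C = {x}` it only remains to see
that `x` is not a loop, which holds because in a paving matroid of rank at least `2` every
dependent set has at least two elements.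
-/

open Set

namespace Set

variable {α : Type*} {A B C E : Set α}

lemma union_subset_union_left_iff_of_disjoint (hA : Disjoint A C) :
    A ∪ C ⊆ B ∪ C ↔ A ⊆ B :=
  ⟨fun h ↦ hA.subset_left_of_subset_union (subset_union_left.trans h),
    union_subset_union_left C⟩

lemma union_ssubset_union_left_iff_of_disjoint (hA : Disjoint A C) (hB : Disjoint B C) :
    A ∪ C ⊂ B ∪ C ↔ A ⊂ B := by
  rw [ssubset_iff_subset_not_subset, ssubset_iff_subset_not_subset,
    union_subset_union_left_iff_of_disjoint hA, union_subset_union_left_iff_of_disjoint hB]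

lemma eq_sdiff_of_union_eq (hA : Disjoint A C) (h : A ∪ C = E) : A = E \ C := by
  rw [← h, union_sdiff_right, hA.sdiff_eq_left]

end Set

namespace Matroid

variable {α : Type*} {M : Matroid α} {C F H : Set α}

lemma contractElem'_eq_contract (M : Matroid α) (x : α) : M.contractElem' x = M ／ {x} := rfl

lemma isFlat_contract_iff (hC : C ⊆ M.E) :
    (M ／ C).IsFlat F ↔ Disjoint F C ∧ M.IsFlat (F ∪ C) := by
  simp only [isFlat_iff_closure_eq, contract_closure_eq]
  constructor
  · intro hF
    have hdisj : Disjoint F C := hF ▸ disjoint_sdiff_left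
    have hFE : F ⊆ M.E := hF ▸ sdiff_subset.trans (M.closure_subset_ground _)
    refine ⟨hdisj, subset_antisymm ?_ (M.subset_closure _ (union_subset hFE hC))⟩
    calc M.closure (F ∪ C) ⊆ M.closure (F ∪ C) \ C ∪ C := subset_sdiff_union _ _
      _ = F ∪ C := by rw [hF]
  · rintro ⟨hdisj, hF⟩
    rw [hF, union_sdiff_right, hdisj.sdiff_eq_left]

lemma isHyperplane'_contract_iff (hC : C ⊆ M.E) :
    (M ／ C).IsHyperplane' H ↔ Disjoint H C ∧ M.IsHyperplane' (H ∪ C) := by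
  simp only [IsHyperplane', isFlat_contract_iff hC, contract_ground]
  constructor
  · rintro ⟨⟨hHC, hH⟩, hne, hmax⟩
    refine ⟨hHC, hH, fun h ↦ hne (eq_sdiff_of_union_eq hHC h), fun F hF hHF ↦ ?_⟩
    have hCF : C ⊆ F := subset_union_right.trans hHF.subset
    have hFC : (F \ C) ∪ C = F := sdiff_union_of_subset hCF
    have hHF' : H ⊂ F \ C := by
      rwa [← union_ssubset_union_left_iff_of_disjoint hHC disjoint_sdiff_left, hFC]
    rw [← hFC, hmax _ ⟨disjoint_sdiff_left, by rwa [hFC]⟩ hHF', sdiff_union_of_subset hC]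
  · rintro ⟨hHC, hH, hne, hmax⟩
    refine ⟨⟨hHC, hH⟩, fun h ↦ hne (by rw [h, sdiff_union_of_subset hC]),
      fun F ⟨hFC, hF⟩ hHF ↦ eq_sdiff_of_union_eq hFC (hmax _ hF ?_)⟩
    rwa [union_ssubset_union_left_iff_of_disjoint hHC hFC]

lemma IsNonloop.contractElem_isHyperplane'_iff {x : α} (hx : M.IsNonloop x) :
    (M ／ {x}).IsHyperplane' H ↔ x ∉ H ∧ M.IsHyperplane' (insert x H) := by
  rw [isHyperplane'_contract_iff (singleton_subset_iff.2 hx.mem_ground), disjoint_singleton_right,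
    union_singleton]

lemma IsNonloop.contractElem_dep_iff {x : α} (hx : M.IsNonloop x) :
    (M ／ {x}).Dep H ↔ x ∉ H ∧ M.Dep (insert x H) := by
  rw [hx.indep.contract_dep_iff, disjoint_singleton_right, union_singleton]

lemma isNonloop_of_forall_dep_two_le_ncard (h : ∀ D, M.Dep D → 2 ≤ D.ncard) {x : α}
    (hx : x ∈ M.E) : M.IsNonloop x := by
  refine isNonloop_iff_mem_compl_loops.2 ⟨hx, fun hloop ↦ ?_⟩
  have := h _ (singleton_dep.2 hloop)
  rw [ncard_singleton] at this
  omega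

end Matroid

open Matroid in
theorem stmt_9_general {n d : ℕ} (M : Matroid (Fin n)) (hE : M.E = Set.univ) (hd : 2 ≤ d)
    (hpaving : ∀ D, M.Dep D → d ≤ D.ncard)
    (E : Set (Set (Fin n))) (hEdef : E = {H | M.IsHyperplane' H ∧ M.Dep H})
    (x : Fin n) :
    {H | (M.contractElem' x).IsHyperplane' H ∧ (M.contractElem' x).Dep H} =
      {H' | ∃ H ∈ E, x ∈ H ∧ H' = H \ {x}} := by
  have hx : M.IsNonloop x :=
    isNonloop_of_forall_dep_two_le_ncard (fun D hD ↦ hd.trans (hpaving D hD)) (hE ▸ mem_univ x)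
  ext H'
  simp only [mem_ofPred_eq, hEdef, contractElem'_eq_contract, hx.contractElem_isHyperplane'_iff,
    hx.contractElem_dep_iff]
  constructor
  · rintro ⟨⟨hxH', hH⟩, -, hdep⟩
    exact ⟨insert x H', ⟨hH, hdep⟩, mem_insert x H', (insert_sdiff_self_of_notMem hxH').symm⟩
  · rintro ⟨H, hH, hxH, rfl⟩
    have hxH' : x ∉ H \ {x} := fun h ↦ h.2 rfl
    rw [insert_sdiff_singleton, insert_eq_of_mem hxH]
    exact ⟨⟨hxH', hH.1⟩, hxH', hH.2⟩

/-- For a paving matroid `M` of rank `d ≥ 2` on `[n]` with `x` not a coloop, the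
dependent hyperplanes of the contraction `M / x` are exactly the sets `H \ {x}` where
`H` is a dependent hyperplane of `M` containing `x`. -/
theorem stmt_9 {n d : ℕ} (M : Matroid (Fin n)) (hE : M.E = Set.univ) (hd : 2 ≤ d)
    (hrank : ∀ B, M.IsBase B → B.ncard = d)
    (hpaving : ∀ D, M.Dep D → d ≤ D.ncard)
    (E : Set (Set (Fin n))) (hEdef : E = {H | M.IsHyperplane' H ∧ M.Dep H})
    (x : Fin n) (hx : ¬ ∀ B, M.IsBase B → x ∈ B) :
    {H | (M.contractElem' x).IsHyperplane' H ∧ (M.contractElem' x).Dep H} =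
      {H' | ∃ H ∈ E, x ∈ H ∧ H' = H \ {x}} :=
  stmt_9_general M hE hd hpaving E hEdef x
end

section
/- Let I and J be cyclic intervals of ZMod n with I ⊄ J, J ⊄ I, and I ∩ J ≠ ∅, and suppose I ∪ J ≠ ZMod n. If K is a third cyclic interval with K ∩ I ≠ ∅ and K ∩ J = ∅ and K ⊄ I, then I \ J is a cyclic interval and K ∩ I is contained in the 'end' of I away from J; consequently I \ (J ∪ K) is a cyclic interval. -/
open Set

def IsWindow {α β : Type*} [Preorder β] (φ : α → β) (S : Set α) : Prop :=
  ∃ x y, S = φ ⁻¹' Ico x y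

namespace IsWindow

variable {α β : Type*} [LinearOrder β] {φ : α → β} {S T : Set α}

theorem inter (hS : IsWindow φ S) (hT : IsWindow φ T) : IsWindow φ (S ∩ T) := by
  obtain ⟨a, b, rfl⟩ := hS
  obtain ⟨c, d, rfl⟩ := hT
  exact ⟨a ⊔ c, b ⊓ d, by rw [← preimage_inter, Ico_inter_Ico]⟩

theorem sdiff (hS : IsWindow φ S) (hT : IsWindow φ T) (hTS : ¬ T ⊆ S) :
    IsWindow φ (S \ T) := by
  obtain ⟨a, b, rfl⟩ := hS
  obtain ⟨c, d, rfl⟩ := hT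
  have hcd : ¬ Ico c d ⊆ Ico a b := fun h => hTS (preimage_mono h)
  have hlt : c < d := by
    by_contra h
    exact hcd (by simp [Ico_eq_empty h])
  have hend : c < a ∨ b < d := by
    simpa only [Ico_subset_Ico_iff hlt, not_and_or, not_le] using hcd
  rw [← preimage_sdiff]
  rcases hend with h | h
  · refine ⟨a ⊔ d, b, congrArg _ ?_⟩
    ext z
    simp only [mem_sdiff, mem_Ico, sup_le_iff]
    grind
  · refine ⟨a, b ⊓ c, congrArg _ ?_⟩
    ext z
    simp only [mem_sdiff, mem_Ico, lt_inf_iff]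
    grind

end IsWindow

theorem isCyclicInterval_zmod_zero_iff {S : Set (ZMod 0)} :
    IsCyclicInterval S ↔ IsWindow (ZMod.cast : ZMod 0 → ℤ) S := by
  have hinj : Function.Injective (ZMod.cast : ZMod 0 → ℤ) :=
    Function.LeftInverse.injective ZMod.intCast_zmod_cast
  have hadd (a : ZMod 0) (t : ℕ) : (ZMod.cast (a + (t : ZMod 0)) : ℤ) = ZMod.cast a + t := rfl
  constructor
  · rintro ⟨a, l, rfl⟩
    refine ⟨ZMod.cast a, ZMod.cast a + l, ?_⟩
    ext z
    simp only [mem_image, mem_ofPred_eq, mem_preimage, mem_Ico]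
    constructor
    · rintro ⟨t, ht, rfl⟩
      rw [hadd]
      omega
    · rintro ⟨h1, h2⟩
      exact ⟨(ZMod.cast z - ZMod.cast a : ℤ).toNat, by omega, hinj (by rw [hadd]; omega)⟩
  · rintro ⟨x, y, rfl⟩
    have hx : (ZMod.cast (Int.cast x : ZMod 0) : ℤ) = x := rfl
    refine ⟨Int.cast x, (y - x).toNat, ?_⟩
    ext z
    simp only [mem_image, mem_ofPred_eq, mem_preimage, mem_Ico]
    constructor
    · rintro ⟨h1, h2⟩
      exact ⟨(ZMod.cast z - x : ℤ).toNat, by omega, hinj (by rw [hadd, hx]; omega)⟩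
    · rintro ⟨t, ht, rfl⟩
      rw [hadd, hx]
      omega

namespace ZMod

variable {n : ℕ} [NeZero n]

theorem val_add_eq_or (u v : ZMod n) :
    (u + v).val = u.val + v.val ∨ (u + v).val + n = u.val + v.val := by
  rcases lt_or_ge (u.val + v.val) n with h | h
  · exact .inl (val_add_of_lt h)
  · exact .inr (val_add_val_of_le h).symm

theorem val_neg_one_eq : (-1 : ZMod n).val = n - 1 := by
  obtain ⟨m, rfl⟩ := Nat.exists_eq_succ_of_ne_zero (NeZero.ne n)
  exact val_neg_one m

end ZMod

section NeZero

variable {n : ℕ} [NeZero n] {S : Set (ZMod n)}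

theorem isCyclicInterval_iff_exists_val_sub_lt :
    IsCyclicInterval S ↔ ∃ (a : ZMod n) (l : ℕ), S = {z | (z - a).val < l} := by
  have himage (a : ZMod n) (l : ℕ) :
      (fun t : ℕ => a + (t : ZMod n)) '' {t | t < l} = {z | (z - a).val < l} := by
    ext z
    constructor
    · rintro ⟨t, ht, rfl⟩
      rw [mem_ofPred_eq, add_sub_cancel_left, ZMod.val_natCast]
      exact (Nat.mod_le t n).trans_lt ht
    · intro h
      exact ⟨_, h, by simp⟩
  simp only [IsCyclicInterval, himage]

namespace IsCyclicInterval

theorem compl (hS : IsCyclicInterval S) : IsCyclicInterval Sᶜ := by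
  obtain ⟨a, l, rfl⟩ := isCyclicInterval_iff_exists_val_sub_lt.1 hS
  refine isCyclicInterval_iff_exists_val_sub_lt.2 ⟨a + (l : ZMod n), n - l, ?_⟩
  ext z
  have hsplit := ZMod.val_add_eq_or (z - a - (l : ZMod n)) (l : ZMod n)
  rw [sub_add_cancel] at hsplit
  have := ZMod.val_lt (z - a - (l : ZMod n))
  have := ZMod.val_lt (z - a)
  simp only [mem_compl_iff, mem_ofPred_eq, not_lt, sub_add_eq_sub_sub]
  rcases lt_or_ge l n with hl | hl
  · rw [ZMod.val_cast_of_lt hl] at hsplit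
    omega
  · omega

theorem isWindow {q : ZMod n} (hS : IsCyclicInterval S) (hq : q ∉ S) :
    IsWindow (fun z => (z - (q + 1)).val) S := by
  obtain ⟨a, l, rfl⟩ := isCyclicInterval_iff_exists_val_sub_lt.1 hS
  refine ⟨(a - (q + 1)).val, (a - (q + 1)).val + l, ?_⟩
  have hqa : l ≤ (q - a).val := by simpa using hq
  -- `q` has coordinate `n - 1`, so the arc from `a` to `q` does not wrap around the cut
  have hsplit_q := ZMod.val_add_eq_or (q - a) (a - (q + 1))
  rw [sub_add_sub_cancel, show q - (q + 1) = -1 by ring, ZMod.val_neg_one_eq] at hsplit_q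
  ext z
  have hsplit_z := ZMod.val_add_eq_or (z - a) (a - (q + 1))
  rw [sub_add_sub_cancel] at hsplit_z
  have := ZMod.val_lt (z - a)
  have := ZMod.val_lt (q - a)
  have := ZMod.val_lt (a - (q + 1))
  simp only [mem_ofPred_eq, mem_preimage, mem_Ico]
  omega

theorem of_isWindow {p : ZMod n} (h : IsWindow (fun z => (z - p).val) S) :
    IsCyclicInterval S := by
  obtain ⟨x, y, rfl⟩ := h
  refine isCyclicInterval_iff_exists_val_sub_lt.2 ⟨p + (x : ZMod n), min y n - x, ?_⟩
  ext z
  have hsplit := ZMod.val_add_eq_or (z - p - (x : ZMod n)) (x : ZMod n)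
  rw [sub_add_cancel] at hsplit
  have := ZMod.val_lt (z - p)
  have := ZMod.val_lt (z - p - (x : ZMod n))
  simp only [mem_ofPred_eq, mem_preimage, mem_Ico, sub_add_eq_sub_sub]
  rcases lt_or_ge x n with hx | hx
  · rw [ZMod.val_cast_of_lt hx] at hsplit
    omega
  · omega

end IsCyclicInterval

end NeZero

theorem stmt_12_general {n : ℕ} (I J K : Set (ZMod n))
    (hI : IsCyclicInterval I) (hJ : IsCyclicInterval J) (hK : IsCyclicInterval K)
    (hJI : ¬ J ⊆ I) (hKJ : K ∩ J = ∅) (hKnI : ¬ K ⊆ I) :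
    IsCyclicInterval (I \ J) ∧ IsCyclicInterval (I \ (J ∪ K)) := by
  rw [← sdiff_sdiff]
  have hKIJ : ¬ K ⊆ I \ J := fun h => hKnI (h.trans sdiff_subset)
  obtain rfl | hn := eq_or_ne n 0
  · simp only [isCyclicInterval_zmod_zero_iff] at hI hJ hK ⊢
    have hIJ := hI.sdiff hJ hJI
    exact ⟨hIJ, hIJ.sdiff hK hKIJ⟩
  · have : NeZero n := ⟨hn⟩
    obtain ⟨q, hqJ, hqI⟩ := not_subset.1 hJI
    have hqK : q ∉ K := fun hqK => (eq_empty_iff_forall_notMem.1 hKJ) q ⟨hqK, hqJ⟩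
    have hIJ : IsWindow (fun z => (z - (q + 1)).val) (I \ J) :=
      (hI.isWindow hqI).inter (hJ.compl.isWindow (not_not.2 hqJ))
    exact ⟨.of_isWindow hIJ, .of_isWindow (hIJ.sdiff (hK.isWindow hqK) hKIJ)⟩

/-- A middle arc `I` overlapping an arc `J`, with `I ∪ J` proper, met by a third arc `K`
disjoint from `J` and not contained in `I`, decomposes: `I \ J` and `I \ (J ∪ K)` are
cyclic intervals. -/
theorem stmt_12 {n : ℕ} (I J K : Set (ZMod n))
    (hI : IsCyclicInterval I) (hJ : IsCyclicInterval J) (hK : IsCyclicInterval K)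
    (hIJ : ¬ I ⊆ J) (hJI : ¬ J ⊆ I) (hIJne : (I ∩ J).Nonempty)
    (hIJuniv : I ∪ J ≠ Set.univ)
    (hKI : (K ∩ I).Nonempty) (hKJ : K ∩ J = ∅) (hKnI : ¬ K ⊆ I) :
    IsCyclicInterval (I \ J) ∧ IsCyclicInterval (I \ (J ∪ K)) :=
  stmt_12_general I J K hI hJ hK hJI hKJ hKnI
end

section
/- Let d ≥ 3 and let A, B, C be subsets of a finite set V such that A ∩ B ∩ C = ∅, the pairwise intersections A∩B, B∩C, C∩A each have cardinality between 1 and d−2, |A| = |B| = |C| = d, every element of V lies in at least one of A, B, C, and each element lies in at most two of them. Suppose D ⊆ V satisfies |D| ≥ d, |D ∩ X| ≤ d − 2 for X ∈ {A, B, C}, D ⊆ (A\(B∪C)) ∪ (B\(A∪C)) ∪ (C\(A∪B)), and the four-edge clutter {A, B, C, D} is such that deleting any single vertex or contracting any single vertex yields an interval clutter while {A,B,C,D} itself is not interval. Then D = (A\(B∪C)) ∪ (B\(A∪C)) ∪ (C\(A∪B)) and |D| = d. -/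
/-- A family of subsets of a finite vertex type is an interval hypergraph if some
ordering of the vertices maps every edge to an interval. -/
def IsIntervalHypergraph (V : Type*) [Fintype V] (E : Set (Set V)) : Prop :=
  ∃ f : V ≃ Fin (Fintype.card V),
    ∀ H ∈ E, ∃ i j : Fin (Fintype.card V), ⇑f '' H = Set.Icc i j

/-!
Intervals of a line have the Helly property, so an interval hypergraph contains no three pairwise
intersecting edges with empty common intersection. Delete a vertex `x` of the private region of
`A`: if `x ∉ D` or `d < |D|`, the edges `B`, `C`, `D` survive, and `B ∩ C ≠ ∅ = B ∩ C ∩ D`, so `D`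
cannot meet both private regions of `B` and `C`. Counting with `|D ∩ X| < d ≤ |D|` shows that `D`
meets all three private regions; hence `D` contains every private vertex, and `|D| ≤ d`.
-/

theorem Set.Icc_inter_Icc_inter_Icc_nonempty {α : Type*} [Lattice α] {a₁ b₁ a₂ b₂ a₃ b₃ : α}
    (h₁₂ : (Icc a₁ b₁ ∩ Icc a₂ b₂).Nonempty) (h₂₃ : (Icc a₂ b₂ ∩ Icc a₃ b₃).Nonempty)
    (h₁₃ : (Icc a₁ b₁ ∩ Icc a₃ b₃).Nonempty) :
    (Icc a₁ b₁ ∩ Icc a₂ b₂ ∩ Icc a₃ b₃).Nonempty := by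
  simp only [Icc_inter_Icc, nonempty_Icc, sup_le_iff, le_inf_iff] at *
  tauto

theorem IsIntervalHypergraph.inter_inter_nonempty {W : Type*} [Fintype W] {E : Set (Set W)}
    (h : IsIntervalHypergraph W E) {X Y Z : Set W} (hX : X ∈ E) (hY : Y ∈ E) (hZ : Z ∈ E)
    (hXY : (X ∩ Y).Nonempty) (hYZ : (Y ∩ Z).Nonempty) (hXZ : (X ∩ Z).Nonempty) :
    (X ∩ Y ∩ Z).Nonempty := by
  obtain ⟨f, hf⟩ := h
  obtain ⟨a₁, b₁, h₁⟩ := hf X hX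
  obtain ⟨a₂, b₂, h₂⟩ := hf Y hY
  obtain ⟨a₃, b₃, h₃⟩ := hf Z hZ
  rw [← Set.image_nonempty (f := f), Set.image_inter f.injective] at hXY hYZ hXZ ⊢
  rw [Set.image_inter f.injective]
  simp only [h₁, h₂, h₃] at hXY hYZ hXZ ⊢
  exact Set.Icc_inter_Icc_inter_Icc_nonempty hXY hYZ hXZ

def deletion {V : Type*} (d : ℕ) (E : Set (Set V)) (x : V) : Set (Set {v : V // v ≠ x}) :=
  {H' | ∃ H ∈ E, (x ∉ H ∧ H' = Subtype.val ⁻¹' H) ∨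
    (x ∈ H ∧ d < H.ncard ∧ H' = Subtype.val ⁻¹' H)}

theorem preimage_mem_deletion {V : Type*} {d : ℕ} {E : Set (Set V)} {x : V} {H : Set V}
    (hH : H ∈ E) (hx : x ∉ H ∨ d < H.ncard) : Subtype.val ⁻¹' H ∈ deletion d E x := by
  by_cases hxH : x ∈ H
  · exact ⟨H, hH, .inr ⟨hxH, hx.resolve_left (not_not.2 hxH), rfl⟩⟩
  · exact ⟨H, hH, .inl ⟨hxH, rfl⟩⟩

theorem IsIntervalHypergraph.inter_inter_nonempty_of_deletion {V : Type*} [Fintype V]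
    [DecidableEq V] {d : ℕ} {E : Set (Set V)} {x : V} (h : IsIntervalHypergraph {v : V // v ≠ x} (deletion d E x))
    {X Y Z : Set V} (hX : X ∈ E) (hY : Y ∈ E) (hZ : Z ∈ E) (hxX : x ∉ X) (hxY : x ∉ Y)
    (hxZ : x ∉ Z ∨ d < Z.ncard) (hXY : (X ∩ Y).Nonempty) (hXZ : (X ∩ Z).Nonempty)
    (hYZ : (Y ∩ Z).Nonempty) : (X ∩ Y ∩ Z).Nonempty := by
  have lift {P Q : Set V} (hxP : x ∉ P) (hPQ : (P ∩ Q).Nonempty) :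
      (Subtype.val ⁻¹' P ∩ Subtype.val ⁻¹' Q : Set {v : V // v ≠ x}).Nonempty :=
    hPQ.elim fun v hv => ⟨⟨v, ne_of_mem_of_not_mem hv.1 hxP⟩, hv⟩
  obtain ⟨⟨v, _⟩, hv⟩ := h.inter_inter_nonempty (preimage_mem_deletion hX (.inl hxX))
    (preimage_mem_deletion hY (.inl hxY)) (preimage_mem_deletion hZ hxZ)
    (lift hxX hXY) (lift hxY hYZ) (lift hxX hXZ)
  exact ⟨v, hv⟩

theorem Set.ncard_eq_ncard_diff_add_ncard_inter_add_ncard_inter {α : Type*} [Finite α]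
    {X Y Z : Set α} (h : X ∩ Y ∩ Z = ∅) :
    X.ncard = (X \ (Y ∪ Z)).ncard + (X ∩ Y).ncard + (Z ∩ X).ncard := by
  have hdisj : Disjoint (X ∩ Y) (Z ∩ X) :=
    Set.disjoint_left.2 fun v hXY hZX => h.subset ⟨hXY, hZX.1⟩
  rw [← Set.ncard_inter_add_ncard_sdiff_eq_ncard X (Y ∪ Z), Set.inter_union_distrib_left,
    Set.inter_comm X Z, Set.ncard_union_eq hdisj]
  omega

section PrivateRegions

variable {V : Type*} [Finite V] {d : ℕ} {D S T U : Set V}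

theorem inter_nonempty_of_not_cycle (hD : D \ S ⊆ T ∪ U) (hdD : d ≤ D.ncard)
    (hsize : T.ncard + U.ncard < d + S.ncard) (hDT : (D ∩ T).ncard < d)
    (hDU : (D ∩ U).ncard < d)
    (hS : ∀ x ∈ S, x ∉ D ∨ d < D.ncard → (D ∩ T).Nonempty → (D ∩ U).Nonempty → False) :
    (D ∩ S).Nonempty := by
  by_contra hDS
  have hDTU : D ⊆ T ∪ U := fun x hx => hD ⟨hx, fun hxS => hDS ⟨x, hx, hxS⟩⟩
  have hcount : D.ncard ≤ (D ∩ T).ncard + (D ∩ U).ncard := by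
    calc D.ncard = (D ∩ (T ∪ U)).ncard := by rw [Set.inter_eq_left.2 hDTU]
      _ ≤ _ := by rw [Set.inter_union_distrib_left]; exact Set.ncard_union_le _ _
  have hTU : D.ncard ≤ T.ncard + U.ncard :=
    (Set.ncard_le_ncard hDTU).trans (Set.ncard_union_le T U)
  obtain ⟨x, hx⟩ := Set.nonempty_of_ncard_ne_zero (s := S) (by omega)
  exact hS x hx (.inl fun hxD => hDS ⟨x, hxD, hx⟩)
    (Set.nonempty_of_ncard_ne_zero (by omega)) (Set.nonempty_of_ncard_ne_zero (by omega))

theorem eq_union_and_ncard_le_of_not_cycle (hD : D ⊆ S ∪ T ∪ U) (hdD : d ≤ D.ncard)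
    (hsizeS : T.ncard + U.ncard < d + S.ncard) (hsizeT : S.ncard + U.ncard < d + T.ncard)
    (hsizeU : S.ncard + T.ncard < d + U.ncard) (hDS : (D ∩ S).ncard < d)
    (hDT : (D ∩ T).ncard < d) (hDU : (D ∩ U).ncard < d)
    (hS : ∀ x ∈ S, x ∉ D ∨ d < D.ncard → (D ∩ T).Nonempty → (D ∩ U).Nonempty → False)
    (hT : ∀ x ∈ T, x ∉ D ∨ d < D.ncard → (D ∩ S).Nonempty → (D ∩ U).Nonempty → False)
    (hU : ∀ x ∈ U, x ∉ D ∨ d < D.ncard → (D ∩ S).Nonempty → (D ∩ T).Nonempty → False) :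
    D = S ∪ T ∪ U ∧ D.ncard ≤ d := by
  have hS' := inter_nonempty_of_not_cycle (fun x hx => by grind) hdD hsizeS hDT hDU hS
  have hT' := inter_nonempty_of_not_cycle (fun x hx => by grind) hdD hsizeT hDS hDU hT
  have hU' := inter_nonempty_of_not_cycle (fun x hx => by grind) hdD hsizeU hDS hDT hU
  refine ⟨hD.antisymm (Set.union_subset (Set.union_subset ?_ ?_) ?_), ?_⟩
  · exact fun x hx => by_contra fun hxD => hS x hx (.inl hxD) hT' hU'
  · exact fun x hx => by_contra fun hxD => hT x hx (.inl hxD) hS' hU'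
  · exact fun x hx => by_contra fun hxD => hU x hx (.inl hxD) hS' hT'
  · by_contra! hd
    obtain ⟨x, -, hx⟩ := hS'
    exact hS x hx (.inr hd) hT' hU'

end PrivateRegions

theorem stmt_13_general {V : Type*} [Fintype V] [DecidableEq V] {d : ℕ} (hd : 3 ≤ d)
    (A B C D : Set V)
    (hABC : A ∩ B ∩ C = ∅)
    (hab1 : 1 ≤ (A ∩ B).ncard) (hbc1 : 1 ≤ (B ∩ C).ncard) (hca1 : 1 ≤ (C ∩ A).ncard)
    (hcardA : A.ncard = d) (hcardB : B.ncard = d) (hcardC : C.ncard = d)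
    (hDcard : d ≤ D.ncard)
    (hDA : (D ∩ A).ncard ≤ d - 2) (hDB : (D ∩ B).ncard ≤ d - 2)
    (hDC : (D ∩ C).ncard ≤ d - 2)
    (hDsub : D ⊆ (A \ (B ∪ C)) ∪ (B \ (A ∪ C)) ∪ (C \ (A ∪ B)))
    (hdel : ∀ x : V, IsIntervalHypergraph {v : V // v ≠ x}
      {H' : Set {v : V // v ≠ x} | ∃ H ∈ ({A, B, C, D} : Set (Set V)),
        (x ∉ H ∧ H' = (Subtype.val ⁻¹' H)) ∨
        (x ∈ H ∧ d < H.ncard ∧ H' = (Subtype.val ⁻¹' H))}) :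
    D = (A \ (B ∪ C)) ∪ (B \ (A ∪ C)) ∪ (C \ (A ∪ B)) ∧ D.ncard = d := by
  have hsizeA := Set.ncard_eq_ncard_diff_add_ncard_inter_add_ncard_inter hABC
  have hsizeB := Set.ncard_eq_ncard_diff_add_ncard_inter_add_ncard_inter (X := B) (Y := C) (Z := A)
    (by rwa [Set.inter_comm, ← Set.inter_assoc])
  have hsizeC := Set.ncard_eq_ncard_diff_add_ncard_inter_add_ncard_inter (X := C) (Y := A) (Z := B)
    (by rwa [Set.inter_assoc, Set.inter_comm])
  rw [Set.union_comm C A] at hsizeB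
  have hDinter {X P : Set V} (hP : P ⊆ X) (hDX : (D ∩ X).ncard ≤ d - 2) : (D ∩ P).ncard < d :=
    (Set.ncard_le_ncard (Set.inter_subset_inter_right D hP)).trans_lt (by omega)
  have hBCD : B ∩ C ∩ D = ∅ := by grind
  have hCAD : C ∩ A ∩ D = ∅ := by grind
  have hABD : A ∩ B ∩ D = ∅ := by grind
  have hmeet {X P : Set V} (hP : P ⊆ X) (h : (D ∩ P).Nonempty) : (X ∩ D).Nonempty :=
    h.mono fun _ hv => ⟨hP hv.2, hv.1⟩
  obtain ⟨hDeq, hDle⟩ := eq_union_and_ncard_le_of_not_cycle hDsub hDcard (by omega) (by omega) (by omega)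
    (hDinter Set.sdiff_subset hDA) (hDinter Set.sdiff_subset hDB) (hDinter Set.sdiff_subset hDC)
    (fun x hx hkeep hT hU => ((hdel x).inter_inter_nonempty_of_deletion (by simp) (by simp)
      (by simp) (hx.2 <| .inl ·) (hx.2 <| .inr ·) hkeep (Set.nonempty_of_ncard_ne_zero (by omega)) (hmeet Set.sdiff_subset hT)
      (hmeet Set.sdiff_subset hU)).ne_empty hBCD)
    (fun x hx hkeep hS hU => ((hdel x).inter_inter_nonempty_of_deletion (by simp) (by simp)
      (by simp) (hx.2 <| .inr ·) (hx.2 <| .inl ·) hkeep (Set.nonempty_of_ncard_ne_zero (by omega)) (hmeet Set.sdiff_subset hU)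
      (hmeet Set.sdiff_subset hS)).ne_empty hCAD)
    (fun x hx hkeep hS hT => ((hdel x).inter_inter_nonempty_of_deletion (by simp) (by simp)
      (by simp) (hx.2 <| .inl ·) (hx.2 <| .inr ·) hkeep (Set.nonempty_of_ncard_ne_zero (by omega)) (hmeet Set.sdiff_subset hS)
      (hmeet Set.sdiff_subset hT)).ne_empty hABD)
  exact ⟨hDeq, hDle.antisymm hDcard⟩

/-- Case 1 of the classification of the fourth edge added to `O_{a,b,c;d}`:
if `D` avoids all pairwise intersections and the four-edge clutter is an excluded-minor
configuration, then `D` is the union of the three private regions and is small. -/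
theorem stmt_13 {V : Type*} [Fintype V] [DecidableEq V] {d : ℕ} (hd : 3 ≤ d)
    (A B C D : Set V)
    (hABC : A ∩ B ∩ C = ∅)
    (hab1 : 1 ≤ (A ∩ B).ncard) (hab2 : (A ∩ B).ncard ≤ d - 2)
    (hbc1 : 1 ≤ (B ∩ C).ncard) (hbc2 : (B ∩ C).ncard ≤ d - 2)
    (hca1 : 1 ≤ (C ∩ A).ncard) (hca2 : (C ∩ A).ncard ≤ d - 2)
    (hcardA : A.ncard = d) (hcardB : B.ncard = d) (hcardC : C.ncard = d)
    (hcover : A ∪ B ∪ C = Set.univ)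
    (hatmost2 : ∀ v : V, ¬ (v ∈ A ∧ v ∈ B ∧ v ∈ C))
    (hDcard : d ≤ D.ncard)
    (hDA : (D ∩ A).ncard ≤ d - 2) (hDB : (D ∩ B).ncard ≤ d - 2)
    (hDC : (D ∩ C).ncard ≤ d - 2)
    (hDsub : D ⊆ (A \ (B ∪ C)) ∪ (B \ (A ∪ C)) ∪ (C \ (A ∪ B)))
    (hnotint : ¬ IsIntervalHypergraph V ({A, B, C, D} : Set (Set V)))
    (hdel : ∀ x : V, IsIntervalHypergraph {v : V // v ≠ x}
      {H' : Set {v : V // v ≠ x} | ∃ H ∈ ({A, B, C, D} : Set (Set V)),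
        (x ∉ H ∧ H' = (Subtype.val ⁻¹' H)) ∨
        (x ∈ H ∧ d < H.ncard ∧ H' = (Subtype.val ⁻¹' H))})
    (hcon : ∀ x : V, IsIntervalHypergraph {v : V // v ≠ x}
      {H' : Set {v : V // v ≠ x} | ∃ H ∈ ({A, B, C, D} : Set (Set V)),
        x ∈ H ∧ H' = (Subtype.val ⁻¹' H)}) :
    D = (A \ (B ∪ C)) ∪ (B \ (A ∪ C)) ∪ (C \ (A ∪ B)) ∧ D.ncard = d :=
  stmt_13_general hd A B C D hABC hab1 hbc1 hca1 hcardA hcardB hcardC hDcard hDA hDB hDC hDsub hdel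
end

section
/- Let A, B, C be subsets of a finite set V with A ∩ B ∩ C = {v} a single point, (A∩B)\C = ∅, A\(B∪C) ≠ ∅, B\(A∪C) ≠ ∅, and C\(A∪B) ≠ ∅. Then the clutter {A, B, C} is not an interval hypergraph, but for every x ∈ V, the family obtained by contracting x (i.e., {A\{x}, B\{x}, C\{x}} restricted to edges containing x) is an interval hypergraph on V\{x}. -/
open Set

section OrdConnected

variable {α : Type*} [LinearOrder α] {I J K : Set α} {v x y : α}

theorem Set.OrdConnected.lt_iff_lt_of_mem_sdiff (hI : I.OrdConnected) (hJ : J.OrdConnected)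
    (hvI : v ∈ I) (hvJ : v ∈ J) (hx : x ∈ I \ J) (hy : y ∈ J \ I) : x < v ↔ v < y := by
  constructor
  · intro hxv
    by_contra! hyv
    rcases le_total x y with hxy | hyx
    · exact hy.2 (hI.out hx.1 hvI ⟨hxy, hyv⟩)
    · exact hx.2 (hJ.out hy.1 hvJ ⟨hyx, hxv.le⟩)
  · intro hvy
    by_contra! hvx
    rcases le_total x y with hxy | hyx
    · exact hx.2 (hJ.out hvJ hy.1 ⟨hvx, hxy⟩)
    · exact hy.2 (hI.out hvI hx.1 ⟨hvy.le, hyx⟩)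

theorem Set.OrdConnected.subset_union_or_subset_union_or_subset_union (hI : I.OrdConnected)
    (hJ : J.OrdConnected) (hK : K.OrdConnected) (h : (I ∩ J ∩ K).Nonempty) :
    I ⊆ J ∪ K ∨ J ⊆ I ∪ K ∨ K ⊆ I ∪ J := by
  obtain ⟨v, ⟨hvI, hvJ⟩, hvK⟩ := h
  by_contra! hcover
  obtain ⟨⟨a, haI, haJK⟩, ⟨b, hbJ, hbIK⟩, ⟨c, hcK, hcIJ⟩⟩ :=
    And.imp not_subset.mp (And.imp not_subset.mp not_subset.mp) hcover
  simp only [mem_union, not_or] at haJK hbIK hcIJ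
  have hab := hI.lt_iff_lt_of_mem_sdiff hJ hvI hvJ ⟨haI, haJK.1⟩ ⟨hbJ, hbIK.1⟩
  have hac := hI.lt_iff_lt_of_mem_sdiff hK hvI hvK ⟨haI, haJK.2⟩ ⟨hcK, hcIJ.1⟩
  have hba := hJ.lt_iff_lt_of_mem_sdiff hI hvJ hvI ⟨hbJ, hbIK.1⟩ ⟨haI, haJK.1⟩
  have hca := hK.lt_iff_lt_of_mem_sdiff hI hvK hvI ⟨hcK, hcIJ.1⟩ ⟨haI, haJK.2⟩
  have hbc := hJ.lt_iff_lt_of_mem_sdiff hK hvJ hvK ⟨hbJ, hbIK.2⟩ ⟨hcK, hcIJ.2⟩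
  rcases lt_or_gt_of_ne (show a ≠ v by rintro rfl; exact haJK.1 hvJ) with hav | hva
  · exact (hab.mp hav).not_gt (hbc.mpr (hac.mp hav))
  · exact (hca.mpr hva).not_gt (hbc.mp (hba.mpr hva))

end OrdConnected

theorem not_isIntervalHypergraph_of_sdiff_nonempty {V : Type*} [Fintype V] {A B C : Set V}
    (hABC : (A ∩ B ∩ C).Nonempty) (hA : (A \ (B ∪ C)).Nonempty)
    (hB : (B \ (A ∪ C)).Nonempty) (hC : (C \ (A ∪ B)).Nonempty) :
    ¬ IsIntervalHypergraph V {A, B, C} := by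
  rintro ⟨f, hf⟩
  have hconn : ∀ H ∈ ({A, B, C} : Set (Set V)), (f '' H).OrdConnected := fun H hH => by
    obtain ⟨i, j, hH⟩ := hf H hH
    exact hH ▸ ordConnected_Icc
  have hcover := (hconn A (by simp)).subset_union_or_subset_union_or_subset_union
    (hconn B (by simp)) (hconn C (by simp))
    (by simpa only [image_inter f.injective] using hABC.image f)
  simp only [← image_union, image_subset_image_iff f.injective] at hcover
  rcases hcover with h | h | h
  exacts [sdiff_nonempty.mp hA h, sdiff_nonempty.mp hB h, sdiff_nonempty.mp hC h]

theorem isIntervalHypergraph_of_forall_eq_preimage_Icc {W β : Type*} [Fintype W]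
    [LinearOrder β] (g : W → β) {E : Set (Set W)}
    (hE : ∀ H ∈ E, H.Nonempty ∧ ∃ p q, H = g ⁻¹' Icc p q) :
    IsIntervalHypergraph W E := by
  let e := Fintype.equivFin W
  let σ := Tuple.sort (g ∘ e.symm)
  refine ⟨e.trans σ.symm, fun H hH => ?_⟩
  obtain ⟨hne, p, q, rfl⟩ := hE H hH
  have : Nonempty W := hne.to_subtype.map Subtype.val
  have : NeZero (Fintype.card W) := ⟨Fintype.card_ne_zero⟩
  have himage : (e.trans σ.symm) '' (g ⁻¹' Icc p q) = (g ∘ e.symm ∘ σ) ⁻¹' Icc p q :=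
    Equiv.image_eq_preimage_symm _ _
  have hmono : Monotone (g ∘ e.symm ∘ σ) := Tuple.monotone_sort (g ∘ e.symm)
  rw [himage]
  exact ⟨_, _, (himage ▸ hne.image _).ordConnected_iff_of_bdd'.mp
    (ordConnected_Icc.preimage_mono hmono)⟩

theorem isIntervalHypergraph_of_subset_triple {W : Type*} [Fintype W] {X Y Z : Set W}
    {E : Set (Set W)} (hXY : Disjoint X Y) (hE : E ⊆ {X, Y, Z}) (hne : ∀ H ∈ E, H.Nonempty) :
    IsIntervalHypergraph W E := by
  classical
  -- the blocks `X \ Z, X ∩ Z, Z \ (X ∪ Y), Y ∩ Z, Y \ Z` in this order, then the rest;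
  -- `X`, `Z`, `Y` get the ranks `[0,1]`, `[1,3]`, `[3,4]`
  let g : W → ℕ := fun w =>
    if w ∈ X then (if w ∈ Z then 1 else 0)
    else if w ∈ Y then (if w ∈ Z then 3 else 4)
    else if w ∈ Z then 2 else 5
  refine isIntervalHypergraph_of_forall_eq_preimage_Icc g fun H hH => ⟨hne H hH, ?_⟩
  rcases hE hH with rfl | rfl | rfl
  · refine ⟨0, 1, ext fun w => ?_⟩
    by_cases hX : w ∈ H <;> by_cases hY : w ∈ Y <;> by_cases hZ : w ∈ Z <;> simp [g, *]
  · refine ⟨3, 4, ext fun w => ?_⟩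
    by_cases hX : w ∈ X <;> by_cases hY : w ∈ H <;> by_cases hZ : w ∈ Z <;>
      simp [g, *, hXY.notMem_of_mem_left]
  · refine ⟨1, 3, ext fun w => ?_⟩
    by_cases hX : w ∈ X <;> by_cases hY : w ∈ Y <;> by_cases hZ : w ∈ H <;> simp [g, *]

theorem Set.nontrivial_of_sdiff_nonempty {α : Type*} {s t : Set α} {v : α} (hvs : v ∈ s)
    (hvt : v ∈ t) (h : (s \ t).Nonempty) : s.Nontrivial :=
  let ⟨_, has, hat⟩ := h
  nontrivial_of_mem_mem_ne hvs has fun hva => hat (hva ▸ hvt)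

/-- The configuration `Y_{a,b;d}` (three sets with a single common point `v`,
`(A∩B)\C = ∅`, and each with a private element) is not an interval hypergraph, yet
every single-vertex contraction of it is. -/
theorem stmt_14 {V : Type*} [Fintype V] [DecidableEq V] (A B C : Set V) (v : V)
    (hABC : A ∩ B ∩ C = {v}) (hAB : (A ∩ B) \ C = ∅)
    (hA : (A \ (B ∪ C)).Nonempty) (hB : (B \ (A ∪ C)).Nonempty)
    (hC : (C \ (A ∪ B)).Nonempty) :
    ¬ IsIntervalHypergraph V ({A, B, C} : Set (Set V)) ∧
      ∀ x : V, IsIntervalHypergraph {w : V // w ≠ x}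
        {H' : Set {w : V // w ≠ x} | ∃ H ∈ ({A, B, C} : Set (Set V)),
          x ∈ H ∧ H' = (Subtype.val ⁻¹' H)} := by
  have hv : v ∈ A ∩ B ∩ C := hABC ▸ rfl
  refine ⟨not_isIntervalHypergraph_of_sdiff_nonempty ⟨v, hv⟩ hA hB hC, fun x => ?_⟩
  have hAB' : A ∩ B ⊆ {v} := hABC ▸ subset_inter Subset.rfl (sdiff_eq_empty.mp hAB)
  have hnt : ∀ H ∈ ({A, B, C} : Set (Set V)), H.Nontrivial := by
    rintro H (rfl | rfl | rfl)
    exacts [nontrivial_of_sdiff_nonempty hv.1.1 (Or.inl hv.1.2) hA,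
      nontrivial_of_sdiff_nonempty hv.1.2 (Or.inl hv.1.1) hB,
      nontrivial_of_sdiff_nonempty hv.2 (Or.inl hv.1.1) hC]
  -- `A` (resp. `B`) survives only if `x ∈ A` (resp. `x ∈ B`), and both survive only if `x = v`
  apply isIntervalHypergraph_of_subset_triple (X := {w | x ∈ A ∧ w.1 ∈ A})
    (Y := {w | x ∈ B ∧ w.1 ∈ B}) (Z := Subtype.val ⁻¹' C)
  · refine disjoint_left.mpr fun w ⟨hxA, hwA⟩ ⟨hxB, hwB⟩ => w.2 ?_
    exact (eq_of_mem_singleton (hAB' ⟨hwA, hwB⟩)).trans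
      (eq_of_mem_singleton (hAB' ⟨hxA, hxB⟩)).symm
  · rintro _ ⟨H, (rfl | rfl | rfl), hxH, rfl⟩ <;> simp [hxH, Set.ext_iff]
  · rintro _ ⟨H, hH, -, rfl⟩
    obtain ⟨y, hy, hyx⟩ := (hnt H hH).exists_ne x
    exact ⟨⟨y, hyx⟩, hy⟩
end

section
/- Let V be a finite set and let A, B, C, D₁, D₂ be the edges of a clutter on V where: A, B, C have size d ≥ 3, pairwise intersections of sizes a, b, c with 1 ≤ a,b,c ≤ d−2, A∩B∩C = ∅, every vertex of V is in at least one and at most two of A, B, C; D₁ = (A\(B∪C)) ∪ (B\(A∪C)) ∪ (C\(A∪B)) with |D₁| = d; D₂ = (A∩B) ∪ (B∩C) ∪ (C∩A). Then D₁ ∩ D₂ = ∅ and D₁ ∪ D₂ = V, and for every x ∈ V the contracted family {H\{x} : x ∈ H, H ∈ {A,B,C,D₁,D₂}} is an interval hypergraph on V\{x}. -/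
/-!
Write `D₁` for the vertices lying in exactly one of `A, B, C` and `D₂` for those lying in at
least two; as `A ∪ B ∪ C = V`, this gives the partition at once. Contracting a vertex `x` keeps
only the edges through `x`. If `x` lies in exactly one of the triangle edges, say `A`, these are
`A` and `D₁`; if it lies in two, say `A` and `B`, they are `A`, `B` and `D₂`. In either case the
Venn regions of `A, B, C` can be listed so that every surviving edge is a union of consecutive
regions, and any ordering of the vertices refining that list of regions makes all surviving edges
intervals.
-/

open Set

theorem Set.OrdConnected.exists_eq_Icc_of_finite {α : Type*} [LinearOrder α] {s : Set α}
    (hs : s.OrdConnected) (hfin : s.Finite) (hne : s.Nonempty) : ∃ a b, s = Icc a b := by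
  obtain ⟨a, ha, ha_min⟩ := exists_min_image s id hfin hne
  obtain ⟨b, hb, hb_max⟩ := exists_max_image s id hfin hne
  exact ⟨a, b, Subset.antisymm (fun y hy => ⟨ha_min y hy, hb_max y hy⟩) (hs.out ha hb)⟩

section IntervalHypergraph

variable {W : Type*} [Fintype W] {E : Set (Set W)}

/-- An empty edge is the interval `Icc 1 0`, which is why two vertices are needed. -/
theorem isIntervalHypergraph_of_ordConnected_image (hW : 2 ≤ Fintype.card W)
    (e : W ≃ Fin (Fintype.card W)) (hE : ∀ H ∈ E, (e '' H).OrdConnected) :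
    IsIntervalHypergraph W E := by
  refine ⟨e, fun H hH => ?_⟩
  rcases (e '' H).eq_empty_or_nonempty with hempty | hne
  · refine ⟨⟨1, hW⟩, ⟨0, by omega⟩, ?_⟩
    rw [hempty, eq_comm, Icc_eq_empty]
    simp [Fin.le_def]
  · exact (hE H hH).exists_eq_Icc_of_finite (toFinite _) hne

theorem exists_equivFin_lt_of_lt {α : Type*} [LinearOrder α] (g : W → α) :
    ∃ e : W ≃ Fin (Fintype.card W), ∀ w w', g w < g w' → e w < e w' := by
  let key : W → α ×ₗ Fin (Fintype.card W) := fun w => toLex (g w, Fintype.equivFin W w)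
  have hkey : Function.Injective key := fun w w' h =>
    (Fintype.equivFin W).injective (congrArg (fun p => (ofLex p).2) h)
  let _ : LinearOrder W := LinearOrder.lift' key hkey
  exact ⟨(monoEquivOfFin W rfl).symm.toEquiv, fun w w' h =>
    (monoEquivOfFin W rfl).symm.lt_iff_lt.2 (Prod.Lex.lt_iff.2 (Or.inl h))⟩

theorem isIntervalHypergraph_of_preimage_Icc {α : Type*} [LinearOrder α]
    (hW : 2 ≤ Fintype.card W) (g : W → α) (hE : ∀ H ∈ E, ∃ l u, H = g ⁻¹' Icc l u) :
    IsIntervalHypergraph W E := by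
  obtain ⟨e, he⟩ := exists_equivFin_lt_of_lt g
  refine isIntervalHypergraph_of_ordConnected_image hW e fun H hH => ?_
  obtain ⟨l, u, rfl⟩ := hE H hH
  refine ordConnected_def.2 ?_
  rintro _ ⟨w, ⟨hlw, -⟩, rfl⟩ _ ⟨w', ⟨-, hw'u⟩, rfl⟩ k ⟨hwk, hkw'⟩
  refine ⟨e.symm k, ⟨?_, ?_⟩, e.apply_symm_apply k⟩
  · exact hlw.trans (not_lt.1 fun h => hwk.not_gt (by simpa using he _ _ h))
  · exact (not_lt.1 fun h => hkw'.not_gt (by simpa using he _ _ h)).trans hw'u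

end IntervalHypergraph

section Contraction

variable {V : Type*}

def contraction (F : Set (Set V)) (x : V) : Set (Set {w : V // w ≠ x}) :=
  {H' | ∃ H ∈ F, x ∈ H ∧ H' = Subtype.val ⁻¹' H}

theorem isIntervalHypergraph_contraction_of_preimage_Icc [Fintype V] [DecidableEq V]
    {α : Type*} [LinearOrder α] {F : Set (Set V)} {x : V} (hV : 3 ≤ Fintype.card V)
    (g : V → α) (hg : ∀ H ∈ F, x ∈ H → ∃ l u, H = g ⁻¹' Icc l u) :
    IsIntervalHypergraph {w : V // w ≠ x} (contraction F x) := by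
  refine isIntervalHypergraph_of_preimage_Icc ?_ (g ∘ Subtype.val) ?_
  · simp only [ne_eq, Fintype.card_subtype_compl, Fintype.card_subtype_eq]
    omega
  · rintro _ ⟨H, hH, hxH, rfl⟩
    obtain ⟨l, u, rfl⟩ := hg H hH hxH
    exact ⟨l, u, rfl⟩

end Contraction

section DeltaClutter

variable {V : Type*} (A B C : Set V)

def outerEdge : Set V := (A \ (B ∪ C)) ∪ (B \ (A ∪ C)) ∪ (C \ (A ∪ B))

def innerEdge : Set V := (A ∩ B) ∪ (B ∩ C) ∪ (C ∩ A)

def deltaClutter : Set (Set V) := {A, B, C, outerEdge A B C, innerEdge A B C}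

theorem outerEdge_inter_innerEdge : outerEdge A B C ∩ innerEdge A B C = ∅ := by
  ext v
  simp only [outerEdge, innerEdge, mem_inter_iff, mem_union, mem_sdiff, mem_empty_iff_false]
  tauto

theorem outerEdge_union_innerEdge : outerEdge A B C ∪ innerEdge A B C = A ∪ B ∪ C := by
  ext v
  simp only [outerEdge, innerEdge, mem_inter_iff, mem_union, mem_sdiff]
  tauto

theorem deltaClutter_swap : deltaClutter B A C = deltaClutter A B C := by
  have houter : outerEdge B A C = outerEdge A B C := by
    ext v
    simp only [outerEdge, mem_union, mem_sdiff]
    tauto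
  have hinner : innerEdge B A C = innerEdge A B C := by
    ext v
    simp only [innerEdge, mem_union, mem_inter_iff]
    tauto
  rw [deltaClutter, deltaClutter, houter, hinner, insert_comm]

theorem deltaClutter_rotate : deltaClutter B C A = deltaClutter A B C := by
  have houter : outerEdge B C A = outerEdge A B C := by
    ext v
    simp only [outerEdge, mem_union, mem_sdiff]
    tauto
  have hinner : innerEdge B C A = innerEdge A B C := by
    ext v
    simp only [innerEdge, mem_union, mem_inter_iff]
    tauto
  rw [deltaClutter, deltaClutter, houter, hinner, insert_comm C A, insert_comm B A]

variable [Fintype V] [DecidableEq V] {A B C} {x : V}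

theorem isIntervalHypergraph_contraction_deltaClutter_of_mem_of_not_mem
    (hV : 3 ≤ Fintype.card V) (hxA : x ∈ A) (hxB : x ∉ B) (hxC : x ∉ C) :
    IsIntervalHypergraph {w : V // w ≠ x} (contraction (deltaClutter A B C) x) := by
  classical
  -- regions: `A ∩ (B ∪ C)`, `A` only, `B` only or `C` only, the rest; `A = [0, 1]`, `D₁ = [1, 2]`
  refine isIntervalHypergraph_contraction_of_preimage_Icc hV
    (fun v => if v ∈ A then (if v ∈ B ∨ v ∈ C then 0 else 1)
      else if (v ∈ B ∧ v ∉ C) ∨ (v ∈ C ∧ v ∉ B) then 2 else 3) ?_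
  simp only [deltaClutter, mem_insert_iff, mem_singleton_iff]
  rintro H (rfl | rfl | rfl | rfl | rfl) hxH
  · refine ⟨0, 1, ?_⟩
    ext v
    simp only [mem_preimage, mem_Icc]
    split_ifs <;> simp_all
  · exact absurd hxH hxB
  · exact absurd hxH hxC
  · refine ⟨1, 2, ?_⟩
    ext v
    simp only [outerEdge, mem_preimage, mem_Icc, mem_union, mem_sdiff]
    split_ifs <;> simp_all
  · simp only [innerEdge, mem_union, mem_inter_iff] at hxH
    tauto

theorem isIntervalHypergraph_contraction_deltaClutter_of_mem_of_mem
    (hV : 3 ≤ Fintype.card V) (hxA : x ∈ A) (hxB : x ∈ B) (hxC : x ∉ C) :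
    IsIntervalHypergraph {w : V // w ≠ x} (contraction (deltaClutter A B C) x) := by
  classical
  -- regions: `A` only, `A ∩ C`, `A ∩ B`, `B ∩ C`, `B` only, the rest;
  -- `A = [0, 2]`, `D₂ = [1, 3]`, `B = [2, 4]`
  refine isIntervalHypergraph_contraction_of_preimage_Icc hV
    (fun v => if v ∈ A then (if v ∈ B then 2 else if v ∈ C then 1 else 0)
      else if v ∈ B then (if v ∈ C then 3 else 4) else 5) ?_
  simp only [deltaClutter, mem_insert_iff, mem_singleton_iff]
  rintro H (rfl | rfl | rfl | rfl | rfl) hxH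
  · refine ⟨0, 2, ?_⟩
    ext v
    simp only [mem_preimage, mem_Icc]
    split_ifs <;> simp_all
  · refine ⟨2, 4, ?_⟩
    ext v
    simp only [mem_preimage, mem_Icc]
    split_ifs <;> simp_all
  · exact absurd hxH hxC
  · simp only [outerEdge, mem_union, mem_sdiff] at hxH
    tauto
  · refine ⟨1, 3, ?_⟩
    ext v
    simp only [innerEdge, mem_preimage, mem_Icc, mem_union, mem_inter_iff]
    split_ifs <;> simp_all

theorem isIntervalHypergraph_contraction_deltaClutter (hV : 3 ≤ Fintype.card V)
    (hx : x ∈ A ∪ B ∪ C) (hx3 : ¬ (x ∈ A ∧ x ∈ B ∧ x ∈ C)) :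
    IsIntervalHypergraph {w : V // w ≠ x} (contraction (deltaClutter A B C) x) := by
  simp only [mem_union] at hx
  by_cases hxA : x ∈ A <;> by_cases hxB : x ∈ B <;> by_cases hxC : x ∈ C
  · exact absurd ⟨hxA, hxB, hxC⟩ hx3
  · exact isIntervalHypergraph_contraction_deltaClutter_of_mem_of_mem hV hxA hxB hxC
  · rw [← deltaClutter_rotate, ← deltaClutter_rotate]
    exact isIntervalHypergraph_contraction_deltaClutter_of_mem_of_mem hV hxC hxA hxB
  · exact isIntervalHypergraph_contraction_deltaClutter_of_mem_of_not_mem hV hxA hxB hxC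
  · rw [← deltaClutter_rotate]
    exact isIntervalHypergraph_contraction_deltaClutter_of_mem_of_mem hV hxB hxC hxA
  · rw [← deltaClutter_swap]
    exact isIntervalHypergraph_contraction_deltaClutter_of_mem_of_not_mem hV hxB hxA hxC
  · rw [← deltaClutter_rotate, ← deltaClutter_rotate]
    exact isIntervalHypergraph_contraction_deltaClutter_of_mem_of_not_mem hV hxC hxA hxB
  · tauto

end DeltaClutter

theorem stmt_18_general {V : Type*} [Fintype V] [DecidableEq V] {d : ℕ} (hd : 3 ≤ d)
    (A B C D₁ D₂ : Set V)
    (hcardA : A.ncard = d)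
    (hcover : A ∪ B ∪ C = Set.univ)
    (hatmost2 : ∀ v : V, ¬ (v ∈ A ∧ v ∈ B ∧ v ∈ C))
    (hD1 : D₁ = (A \ (B ∪ C)) ∪ (B \ (A ∪ C)) ∪ (C \ (A ∪ B)))
    (hD2 : D₂ = (A ∩ B) ∪ (B ∩ C) ∪ (C ∩ A)) :
    D₁ ∩ D₂ = ∅ ∧ D₁ ∪ D₂ = Set.univ ∧
      ∀ x : V, IsIntervalHypergraph {w : V // w ≠ x}
        {H' : Set {w : V // w ≠ x} | ∃ H ∈ ({A, B, C, D₁, D₂} : Set (Set V)),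
          x ∈ H ∧ H' = (Subtype.val ⁻¹' H)} := by
  subst hD1 hD2
  have hV : 3 ≤ Fintype.card V := by
    rw [← Nat.card_eq_fintype_card]
    exact hcardA ▸ hd |>.trans (ncard_le_card A)
  refine ⟨outerEdge_inter_innerEdge A B C, (outerEdge_union_innerEdge A B C).trans hcover,
    fun x => ?_⟩
  exact isIntervalHypergraph_contraction_deltaClutter hV (hcover ▸ mem_univ x) (hatmost2 x)

/-- The clutter `Δ³_{a,b,c}`: the triangle `O_{a,b,c;d}` together with the outer edge
`D₁` (union of private regions) and the inner edge `D₂` (union of pairwise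
intersections). Then `D₁, D₂` partition `V` and every single-vertex contraction of the
five-edge clutter is an interval hypergraph. -/
theorem stmt_18 {V : Type*} [Fintype V] [DecidableEq V] {d a b c : ℕ} (hd : 3 ≤ d)
    (A B C D₁ D₂ : Set V)
    (hcardA : A.ncard = d) (hcardB : B.ncard = d) (hcardC : C.ncard = d)
    (ha : (A ∩ B).ncard = a) (hb : (B ∩ C).ncard = b) (hc : (C ∩ A).ncard = c)
    (ha1 : 1 ≤ a) (ha2 : a ≤ d - 2) (hb1 : 1 ≤ b) (hb2 : b ≤ d - 2)
    (hc1 : 1 ≤ c) (hc2 : c ≤ d - 2)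
    (hABC : A ∩ B ∩ C = ∅)
    (hcover : A ∪ B ∪ C = Set.univ)
    (hatmost2 : ∀ v : V, ¬ (v ∈ A ∧ v ∈ B ∧ v ∈ C))
    (hD1 : D₁ = (A \ (B ∪ C)) ∪ (B \ (A ∪ C)) ∪ (C \ (A ∪ B)))
    (hD1card : D₁.ncard = d)
    (hD2 : D₂ = (A ∩ B) ∪ (B ∩ C) ∪ (C ∩ A))
    (hclutter : ∀ H₁ ∈ ({A, B, C, D₁, D₂} : Set (Set V)),
      ∀ H₂ ∈ ({A, B, C, D₁, D₂} : Set (Set V)), H₁ ≠ H₂ → ¬ H₁ ⊆ H₂) :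
    D₁ ∩ D₂ = ∅ ∧ D₁ ∪ D₂ = Set.univ ∧
      ∀ x : V, IsIntervalHypergraph {w : V // w ≠ x}
        {H' : Set {w : V // w ≠ x} | ∃ H ∈ ({A, B, C, D₁, D₂} : Set (Set V)),
          x ∈ H ∧ H' = (Subtype.val ⁻¹' H)} :=
  stmt_18_general hd A B C D₁ D₂ hcardA hcover hatmost2 hD1 hD2
end
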